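/- arXiv:math/0212325 — 7 statements merged into one kernel-verified Lean document; each statement's English description precedes it below -/
import Mathlib

section
/- Under the symmetrization linear isomorphism U(𝔵) ≅ S•(𝔵) for a Lie algebra 𝔵 over a field of characteristic 0, the map x ↦ m(Δ(x) − x⊗1 − 1⊗x) on U(𝔵) corresponds to the map ∑_{i≥0} (2^i − 2) p_i on S•(𝔵), where p_i is the projection onto the i-th symmetric power. -/
open scoped TensorProduct

set_option linter.unusedSectionVars false


open Finset in
lemma sum_pow_expand {ι R : Type*} [DecidableEq ι] [Semiring R] (s : Finset ι) (a : ι → R) :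
    ∀ n : ℕ, (∑ i ∈ s, a i) ^ n =
      ∑ f ∈ Fintype.piFinset (fun _ : Fin n => s), (List.ofFn fun j => a (f j)).prod := by
  intro n
  induction n with
  | zero => simp
  | succ n ih =>
    rw [pow_succ', ih, Finset.sum_mul]
    simp_rw [Finset.mul_sum]
    rw [← Finset.sum_product']
    refine Finset.sum_nbij' (fun p => Fin.cons p.1 p.2) (fun f => (f 0, Fin.tail f)) ?_ ?_ ?_ ?_ ?_
    · intro p hp
      simp only [Finset.mem_product, Fintype.mem_piFinset] at hp ⊢
      intro i
      refine Fin.cases ?_ ?_ i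
      · simpa using hp.1
      · intro j; simpa using hp.2 j
    · intro f hf
      simp only [Fintype.mem_piFinset, Finset.mem_product] at hf ⊢
      exact ⟨hf 0, fun j => hf j.succ⟩
    · intro p hp; simp [Fin.cons_zero, Fin.tail_cons]
    · intro f hf; simp [Fin.cons_self_tail]
    · intro p hp
      rw [List.ofFn_succ, List.prod_cons]
      simp [Fin.tail]


lemma incl_excl {n : ℕ} (f : Fin n → Fin n) :
    ∑ S ∈ Finset.univ.filter (fun S : Finset (Fin n) => ∀ j, f j ∈ S),
        (-1 : ℤ) ^ (n - S.card) =
      if Function.Bijective f then 1 else 0 := by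
  classical
  have hmem : ∀ S : Finset (Fin n), (∀ j, f j ∈ S) ↔ Sᶜ ⊆ (Finset.image f Finset.univ)ᶜ := by
    intro S
    rw [Finset.compl_subset_compl]
    constructor
    · intro h i hi
      obtain ⟨j, -, rfl⟩ := Finset.mem_image.1 hi
      exact h j
    · intro h j
      exact h (Finset.mem_image.2 ⟨j, Finset.mem_univ j, rfl⟩)
  have key : ∑ S ∈ Finset.univ.filter (fun S : Finset (Fin n) => ∀ j, f j ∈ S),
      (-1 : ℤ) ^ (n - S.card) =
      ∑ R ∈ (Finset.image f Finset.univ)ᶜ.powerset, (-1 : ℤ) ^ R.card := by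
    refine Finset.sum_nbij' (fun S => Sᶜ) (fun R => Rᶜ) ?_ ?_ ?_ ?_ ?_
    · intro S hS
      simp only [Finset.mem_filter, Finset.mem_univ, true_and] at hS
      exact Finset.mem_powerset.2 ((hmem S).1 hS)
    · intro R hR
      simp only [Finset.mem_powerset] at hR
      simp only [Finset.mem_filter, Finset.mem_univ, true_and]
      exact (hmem Rᶜ).2 (by simpa using hR)
    · intro S _; simp
    · intro R _; simp
    · intro S _
      congr 1
      rw [Finset.card_compl, Fintype.card_fin]
  rw [key, Finset.sum_powerset_neg_one_pow_card]
  congr 1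
  rw [eq_iff_iff, Finset.compl_eq_empty_iff]
  constructor
  · intro h
    have hsurj : Function.Surjective f := fun y => by
      have : y ∈ Finset.image f Finset.univ := by rw [h]; exact Finset.mem_univ y
      obtain ⟨j, -, rfl⟩ := Finset.mem_image.1 this
      exact ⟨j, rfl⟩
    exact Finite.surjective_iff_bijective.1 hsurj
  · intro h
    apply Finset.eq_univ_of_forall
    intro y
    obtain ⟨j, rfl⟩ := h.2 y
    exact Finset.mem_image.2 ⟨j, Finset.mem_univ j, rfl⟩


section
variable {R : Type*} [Ring R]

lemma polarization (n : ℕ) (a : Fin n → R) :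
    ∑ S : Finset (Fin n), (-1 : ℤ) ^ (n - S.card) • (∑ i ∈ S, a i) ^ n =
      ∑ σ : Equiv.Perm (Fin n), (List.ofFn fun j => a (σ j)).prod := by
  classical
  have hpf : ∀ S : Finset (Fin n),
      Fintype.piFinset (fun _ : Fin n => S) =
        Finset.univ.filter (fun f : Fin n → Fin n => ∀ j, f j ∈ S) := by
    intro S
    ext f
    simp [Fintype.mem_piFinset]
  calc
    ∑ S : Finset (Fin n), (-1 : ℤ) ^ (n - S.card) • (∑ i ∈ S, a i) ^ n
      = ∑ S : Finset (Fin n), ∑ f : Fin n → Fin n,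
          (if ∀ j, f j ∈ S then ((-1 : ℤ) ^ (n - S.card) • (List.ofFn fun j => a (f j)).prod) else 0) := by
        refine Finset.sum_congr rfl fun S _ => ?_
        rw [sum_pow_expand S a n, hpf S, Finset.sum_filter, Finset.smul_sum]
        refine Finset.sum_congr rfl fun f _ => ?_
        split <;> simp
    _ = ∑ f : Fin n → Fin n,
          (∑ S ∈ Finset.univ.filter (fun S : Finset (Fin n) => ∀ j, f j ∈ S),
            (-1 : ℤ) ^ (n - S.card)) • (List.ofFn fun j => a (f j)).prod := by
        rw [Finset.sum_comm]
        refine Finset.sum_congr rfl fun f _ => ?_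
        rw [Finset.sum_filter, Finset.sum_smul]
        refine Finset.sum_congr rfl fun S _ => ?_
        split <;> simp
    _ = ∑ f : Fin n → Fin n,
          (if Function.Bijective f then (List.ofFn fun j => a (f j)).prod else 0) := by
        refine Finset.sum_congr rfl fun f _ => ?_
        rw [incl_excl f]
        split <;> simp
    _ = ∑ f ∈ Finset.univ.filter (fun f : Fin n → Fin n => Function.Bijective f),
          (List.ofFn fun j => a (f j)).prod := by
        rw [Finset.sum_filter]
    _ = ∑ σ : Equiv.Perm (Fin n), (List.ofFn fun j => a (σ j)).prod := by
        refine Finset.sum_bij' (i := fun f hf => Equiv.ofBijective f (by simpa using hf))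
          (j := fun (σ : Equiv.Perm (Fin n)) _ => ⇑σ) ?_ ?_ ?_ ?_ ?_
        · intro f hf; exact Finset.mem_univ _
        · intro σ _
          simp only [Finset.mem_filter, Finset.mem_univ, true_and]
          exact σ.bijective
        · intro f hf; rfl
        · intro σ _
          ext y
          simp [Equiv.ofBijective]
        · intro f hf
          simp [Equiv.ofBijective]

end


attribute [local instance 100] LieRing.ofAssociativeRing

noncomputable section

namespace Stmt1

variable (K : Type*) [Field K] [CharZero K] (L : Type*) [LieRing L] [LieAlgebra K L]

/-- The Lie algebra morphism `x ↦ ι x ⊗ 1 + 1 ⊗ ι x` from `L` into `U(L) ⊗ U(L)`. -/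
def primLieHom : L →ₗ⁅K⁆ UniversalEnvelopingAlgebra K L ⊗[K] UniversalEnvelopingAlgebra K L :=
  { __ := (Algebra.TensorProduct.includeLeft
        (S := K)).toLinearMap.comp (UniversalEnvelopingAlgebra.ι K (L := L)).toLinearMap +
      (Algebra.TensorProduct.includeRight).toLinearMap.comp
        (UniversalEnvelopingAlgebra.ι K (L := L)).toLinearMap
    map_lie' := by
      intro x y
      simp only [LinearMap.toFun_eq_coe, LinearMap.add_apply, LinearMap.coe_comp,
        Function.comp_apply, AlgHom.toLinearMap_apply, LieHom.coe_toLinearMap,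
        Algebra.TensorProduct.includeLeft_apply, Algebra.TensorProduct.includeRight_apply,
        LieHom.map_lie, Ring.lie_def]
      simp only [mul_add, add_mul, Algebra.TensorProduct.tmul_mul_tmul, mul_one, one_mul]
      simp only [TensorProduct.sub_tmul, TensorProduct.tmul_sub]
      abel }

/-- The standard coproduct on the universal enveloping algebra, determined by
`Δ(x) = x ⊗ 1 + 1 ⊗ x` for `x ∈ L`. -/
def comulUEA :
    UniversalEnvelopingAlgebra K L →ₐ[K]
      UniversalEnvelopingAlgebra K L ⊗[K] UniversalEnvelopingAlgebra K L :=
  UniversalEnvelopingAlgebra.lift K (primLieHom K L)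

lemma comulUEA_ι (y : L) :
    comulUEA K L (UniversalEnvelopingAlgebra.ι K y) =
      UniversalEnvelopingAlgebra.ι K y ⊗ₜ[K] 1 + 1 ⊗ₜ[K] UniversalEnvelopingAlgebra.ι K y := by
  rw [comulUEA, UniversalEnvelopingAlgebra.lift_ι_apply]
  rfl

lemma mul'_comul_pow (y : L) (n : ℕ) :
    LinearMap.mul' K (UniversalEnvelopingAlgebra K L)
        (comulUEA K L ((UniversalEnvelopingAlgebra.ι K y) ^ n)) =
      2 ^ n • (UniversalEnvelopingAlgebra.ι K y) ^ n := by
  set u := UniversalEnvelopingAlgebra.ι K (L := L) y with hu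
  rw [map_pow, comulUEA_ι]
  have hc : Commute (u ⊗ₜ[K] (1 : UniversalEnvelopingAlgebra K L)) (1 ⊗ₜ[K] u) := by
    simp [Commute, SemiconjBy, Algebra.TensorProduct.tmul_mul_tmul]
  rw [hc.add_pow]
  rw [map_sum]
  have key : ∀ k ∈ Finset.range (n + 1),
      LinearMap.mul' K (UniversalEnvelopingAlgebra K L)
        ((u ⊗ₜ[K] (1:UniversalEnvelopingAlgebra K L)) ^ k * (1 ⊗ₜ[K] u) ^ (n - k) *
          ((n.choose k : ℕ) : UniversalEnvelopingAlgebra K L ⊗[K] UniversalEnvelopingAlgebra K L)) =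
      n.choose k • u ^ n := by
    intro k hk
    rw [Finset.mem_range, Nat.lt_succ_iff] at hk
    rw [Algebra.TensorProduct.tmul_pow, Algebra.TensorProduct.tmul_pow, one_pow, one_pow,
      Algebra.TensorProduct.tmul_mul_tmul, mul_one, one_mul,
      ← nsmul_eq_mul', map_nsmul, LinearMap.mul'_apply, ← pow_add,
      Nat.add_sub_cancel' hk]
  rw [Finset.sum_congr rfl key, ← Finset.sum_smul, Nat.sum_range_choose]

lemma mul'_comul_symm_sum (n : ℕ) (x : Fin n → L) :
    LinearMap.mul' K (UniversalEnvelopingAlgebra K L)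
        (comulUEA K L
          (∑ σ : Equiv.Perm (Fin n),
            (List.ofFn fun i => UniversalEnvelopingAlgebra.ι K (x (σ i))).prod)) =
      2 ^ n • ∑ σ : Equiv.Perm (Fin n),
          (List.ofFn fun i => UniversalEnvelopingAlgebra.ι K (x (σ i))).prod := by
  set a : Fin n → UniversalEnvelopingAlgebra K L :=
    fun i => UniversalEnvelopingAlgebra.ι K (x i) with ha
  rw [← polarization n a]
  rw [map_sum, map_sum]
  have step : ∀ S : Finset (Fin n),
      LinearMap.mul' K (UniversalEnvelopingAlgebra K L)
        (comulUEA K L ((-1 : ℤ) ^ (n - S.card) • (∑ i ∈ S, a i) ^ n)) =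
      (-1 : ℤ) ^ (n - S.card) • (2 ^ n • (∑ i ∈ S, a i) ^ n) := by
    intro S
    rw [map_zsmul, map_zsmul]
    congr 1
    have : (∑ i ∈ S, a i) = UniversalEnvelopingAlgebra.ι K (∑ i ∈ S, x i) := by
      simp only [ha, ← LieHom.coe_toLinearMap, map_sum]
    rw [this, mul'_comul_pow]
  refine Eq.trans (Finset.sum_congr rfl fun S _ => step S) ?_
  rw [Finset.smul_sum]
  exact Finset.sum_congr rfl fun S _ => (smul_comm _ _ _)


/-- under the symmetrization map, which sends the symmetric word
`x_1 ⋯ x_n` to `(1/n!) ∑_{σ ∈ S_n} ι(x_{σ(1)}) ⋯ ι(x_{σ(n)})`, the operator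
`E : x ↦ m(Δ(x) − x⊗1 − 1⊗x)` on `U(L)` acts on the image of the `n`-th symmetric power
as multiplication by `2^n − 2`; i.e. `E` corresponds to `∑_{i ≥ 0} (2^i − 2) p_i`. -/
theorem symmetrization_eigenvalue (n : ℕ) (x : Fin n → L) :
    LinearMap.mul' K (UniversalEnvelopingAlgebra K L)
        (comulUEA K L
            ((n.factorial : K)⁻¹ •
              ∑ σ : Equiv.Perm (Fin n),
                (List.ofFn fun i => UniversalEnvelopingAlgebra.ι K (x (σ i))).prod)
          - ((n.factorial : K)⁻¹ •
              ∑ σ : Equiv.Perm (Fin n),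
                (List.ofFn fun i => UniversalEnvelopingAlgebra.ι K (x (σ i))).prod)
              ⊗ₜ[K] (1 : UniversalEnvelopingAlgebra K L)
          - (1 : UniversalEnvelopingAlgebra K L) ⊗ₜ[K]
              ((n.factorial : K)⁻¹ •
                ∑ σ : Equiv.Perm (Fin n),
                  (List.ofFn fun i => UniversalEnvelopingAlgebra.ι K (x (σ i))).prod)) =
      ((2 : K) ^ n - 2) •
        ((n.factorial : K)⁻¹ •
          ∑ σ : Equiv.Perm (Fin n),
            (List.ofFn fun i => UniversalEnvelopingAlgebra.ι K (x (σ i))).prod) := by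
  set W : UniversalEnvelopingAlgebra K L :=
    ∑ σ : Equiv.Perm (Fin n),
      (List.ofFn fun i => UniversalEnvelopingAlgebra.ι K (x (σ i))).prod with hW
  set c : K := (n.factorial : K)⁻¹ with hc
  rw [map_sub, map_sub, map_smul, map_smul, mul'_comul_symm_sum, ← hW,
    ← TensorProduct.smul_tmul', LinearMap.map_smul, LinearMap.mul'_apply, mul_one,
    TensorProduct.tmul_smul, LinearMap.map_smul, LinearMap.mul'_apply, one_mul]
  have h2 : (2 : ℕ) ^ n • W = ((2 : K) ^ n) • W := by
    rw [← Nat.cast_smul_eq_nsmul K]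
    norm_num
  rw [h2]
  module

end Stmt1
end
end

section
/- For n ≤ m and a family (I_1,…,I_n) of pairwise disjoint subsets of {1,…,m}, there is a unique algebra morphism Δ^{(I_1,…,I_n)} : T_n → T_m with Δ^{(I_1,…,I_n)}(t_{ij}) = ∑_{α∈I_i, β∈I_j} t_{αβ} for all 1 ≤ i ≠ j ≤ n. In particular, the assignment respects the defining relations of T_n. -/
noncomputable section

namespace ChordDiag

/-- Index type for the generators `t_{ij}`, `1 ≤ i ≠ j ≤ n`. -/
abbrev Gen (n : ℕ) := {p : Fin n × Fin n // p.1 ≠ p.2}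

/-- The defining relations of the algebra of chord diagrams (infinitesimal braid relations):
`t_{ij} = t_{ji}`; `[t_{ij}, t_{kl}] = 0` for `i,j,k,l` pairwise distinct;
`[t_{ij}, t_{ik} + t_{jk}] = 0` for `i,j,k` pairwise distinct. -/
inductive Rel (K : Type*) [CommRing K] (n : ℕ) :
    FreeAlgebra K (Gen n) → FreeAlgebra K (Gen n) → Prop
  | symm (i j : Fin n) (hij : i ≠ j) :
      Rel K n (FreeAlgebra.ι K (⟨(i, j), hij⟩ : Gen n))
        (FreeAlgebra.ι K (⟨(j, i), hij.symm⟩ : Gen n))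
  | comm (i j k l : Fin n) (hij : i ≠ j) (hkl : k ≠ l)
      (hik : i ≠ k) (hil : i ≠ l) (hjk : j ≠ k) (hjl : j ≠ l) :
      Rel K n (FreeAlgebra.ι K (⟨(i, j), hij⟩ : Gen n) * FreeAlgebra.ι K (⟨(k, l), hkl⟩ : Gen n))
        (FreeAlgebra.ι K (⟨(k, l), hkl⟩ : Gen n) * FreeAlgebra.ι K (⟨(i, j), hij⟩ : Gen n))
  | braid (i j k : Fin n) (hij : i ≠ j) (hik : i ≠ k) (hjk : j ≠ k) :
      Rel K n
        (FreeAlgebra.ι K (⟨(i, j), hij⟩ : Gen n) *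
          (FreeAlgebra.ι K (⟨(i, k), hik⟩ : Gen n) + FreeAlgebra.ι K (⟨(j, k), hjk⟩ : Gen n)))
        ((FreeAlgebra.ι K (⟨(i, k), hik⟩ : Gen n) + FreeAlgebra.ι K (⟨(j, k), hjk⟩ : Gen n)) *
          FreeAlgebra.ι K (⟨(i, j), hij⟩ : Gen n))

/-- The algebra `T_n` of chord diagrams. -/
abbrev T (K : Type*) [CommRing K] (n : ℕ) := RingQuot (Rel K n)

/-- The generator `t_{ij}` of `T_n` (junk value `0` if `i = j`). -/
def t (K : Type*) [CommRing K] (n : ℕ) (i j : Fin n) : T K n :=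
  if h : i = j then 0
  else RingQuot.mkAlgHom K (Rel K n) (FreeAlgebra.ι K (⟨(i, j), h⟩ : Gen n))

end ChordDiag

open ChordDiag

section Aux

variable (K : Type*) [CommRing K] {m : ℕ}

lemma t_apply_ne {i j : Fin m} (h : i ≠ j) :
    t K m i j = RingQuot.mkAlgHom K (Rel K m) (FreeAlgebra.ι K (⟨(i, j), h⟩ : Gen m)) := by
  rw [t, dif_neg h]

lemma t_symm (i j : Fin m) : t K m i j = t K m j i := by
  by_cases h : i = j
  · subst h; rfl
  · rw [t_apply_ne K h, t_apply_ne K (Ne.symm h)]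
    exact RingQuot.mkAlgHom_rel K (Rel.symm i j h)

lemma t_commute {i j k l : Fin m} (hik : i ≠ k) (hil : i ≠ l) (hjk : j ≠ k) (hjl : j ≠ l) :
    Commute (t K m i j) (t K m k l) := by
  by_cases hij : i = j
  · rw [t, dif_pos hij]; exact Commute.zero_left _
  by_cases hkl : k = l
  · rw [show t K m k l = 0 from by rw [t, dif_pos hkl]]; exact Commute.zero_right _
  rw [t_apply_ne K hij, t_apply_ne K hkl]
  unfold Commute SemiconjBy
  rw [← map_mul, ← map_mul]
  exact RingQuot.mkAlgHom_rel K (Rel.comm i j k l hij hkl hik hil hjk hjl)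

lemma t_braid {i j k : Fin m} (hij : i ≠ j) (hik : i ≠ k) (hjk : j ≠ k) :
    Commute (t K m i j) (t K m i k + t K m j k) := by
  rw [t_apply_ne K hij, t_apply_ne K hik, t_apply_ne K hjk]
  unfold Commute SemiconjBy
  rw [← map_add, ← map_mul, ← map_mul]
  exact RingQuot.mkAlgHom_rel K (Rel.braid i j k hij hik hjk)

end Aux

/-- for `n ≤ m` and pairwise disjoint subsets `I_1, …, I_n` of `{1,…,m}`,
there is a unique algebra morphism `Δ^{(I_1,…,I_n)} : T_n → T_m` with
`t_{ij} ↦ ∑_{α ∈ I_i, β ∈ I_j} t_{αβ}` for all `i ≠ j`. -/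
theorem stmt7 (K : Type*) [Field K] [CharZero K] (n m : ℕ) (hnm : n ≤ m)
    (I : Fin n → Finset (Fin m)) (hdisj : ∀ i j : Fin n, i ≠ j → Disjoint (I i) (I j)) :
    ∃! φ : T K n →ₐ[K] T K m,
      ∀ i j : Fin n, i ≠ j →
        φ (t K n i j) = ∑ α ∈ I i, ∑ β ∈ I j, t K m α β := by
  -- notation for disjointness of elements
  have hne : ∀ {i j : Fin n} {α β : Fin m}, i ≠ j → α ∈ I i → β ∈ I j → α ≠ β := by
    intro i j α β hij hα hβ
    exact fun h => Finset.disjoint_left.mp (hdisj i j hij) hα (h ▸ hβ)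
  -- the map on generators
  set f : Gen n → T K m := fun p => ∑ α ∈ I p.1.1, ∑ β ∈ I p.1.2, t K m α β with hf
  set F : FreeAlgebra K (Gen n) →ₐ[K] T K m := FreeAlgebra.lift K f with hF
  have hFι : ∀ p : Gen n, F (FreeAlgebra.ι K p) = f p := fun p => FreeAlgebra.lift_ι_apply f p
  -- F respects the relations
  have hrel : ∀ ⦃x y : FreeAlgebra K (Gen n)⦄, Rel K n x y → F x = F y := by
    intro x y hxy
    induction hxy with
    | symm i j hij =>
        rw [hFι, hFι]
        simp only [hf]
        rw [Finset.sum_comm]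
        exact Finset.sum_congr rfl fun β _ => Finset.sum_congr rfl fun α _ => t_symm K α β
    | comm i j k l hij hkl hik hil hjk hjl =>
        rw [map_mul, map_mul, hFι, hFι]
        refine Commute.sum_left _ _ _ fun α hα => Commute.sum_left _ _ _ fun β hβ =>
          Commute.sum_right _ _ _ fun γ hγ => Commute.sum_right _ _ _ fun δ hδ => ?_
        exact t_commute K (hne hik hα hγ) (hne hil hα hδ) (hne hjk hβ hγ) (hne hjl hβ hδ)
    | braid i j k hij hik hjk =>
        rw [map_mul, map_add, map_mul, map_add, hFι, hFι, hFι]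
        refine Commute.sum_left _ _ _ fun α hα => Commute.sum_left _ _ _ fun β hβ => ?_
        -- rewrite the right factor as a sum over γ ∈ I k
        simp only [hf]
        rw [Finset.sum_comm (s := I i) (t := I k), Finset.sum_comm (s := I j) (t := I k),
          ← Finset.sum_add_distrib]
        refine Commute.sum_right _ _ _ fun γ hγ => ?_
        -- split off the α and β terms
        rw [← Finset.add_sum_erase _ _ hα, ← Finset.add_sum_erase _ _ hβ,
          add_add_add_comm]
        refine Commute.add_right (t_braid K (hne hij hα hβ) (hne hik hα hγ) (hne hjk hβ hγ)) ?_
        refine Commute.add_right ?_ ?_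
        · refine Commute.sum_right _ _ _ fun α' hα' => ?_
          have hα'I : α' ∈ I i := Finset.mem_of_mem_erase hα'
          exact t_commute K (Finset.ne_of_mem_erase hα').symm
            (hne hik hα hγ) (hne hij hα'I hβ).symm (hne hjk hβ hγ)
        · refine Commute.sum_right _ _ _ fun β' hβ' => ?_
          have hβ'I : β' ∈ I j := Finset.mem_of_mem_erase hβ'
          exact t_commute K (hne hij hα hβ'I) (hne hik hα hγ)
            (Finset.ne_of_mem_erase hβ').symm (hne hjk hβ hγ)
  refine ⟨RingQuot.liftAlgHom K ⟨F, hrel⟩, ?_, ?_⟩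
  · intro i j hij
    rw [t_apply_ne K hij, RingQuot.liftAlgHom_mkAlgHom_apply, hFι]
  · intro φ hφ
    apply RingQuot.ringQuot_ext'
    apply FreeAlgebra.hom_ext
    funext p
    obtain ⟨⟨i, j⟩, hij⟩ := p
    have h1 : φ (RingQuot.mkAlgHom K (Rel K n) (FreeAlgebra.ι K (⟨(i, j), hij⟩ : Gen n)))
        = ∑ α ∈ I i, ∑ β ∈ I j, t K m α β := by
      rw [← t_apply_ne K hij]; exact hφ i j hij
    simp only [AlgHom.comp_apply, Function.comp_apply, AlgHom.coe_comp]
    rw [h1, RingQuot.liftAlgHom_mkAlgHom_apply, hFι]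
end
end

section
/- Let 𝔱_n be the Lie algebra with generators t_{ij}=t_{ji} (1 ≤ i ≠ j ≤ n) and infinitesimal braid relations. The Lie subalgebra of 𝔱_n generated by t_{1n},…,t_{n−1,n} is an ideal of 𝔱_n, and 𝔱_n is the semidirect product of 𝔱_{n−1} with this ideal; in particular the natural map 𝔱_{n−1} ⊕ F_Lie(t_{1n},…,t_{n−1,n}) → 𝔱_n is a linear isomorphism (Drinfeld). -/
noncomputable section

namespace Stmt10

variable (K : Type*) [Field K] [CharZero K]

/-- Index type for the generators `t_{ij}`, `1 ≤ i ≠ j ≤ n`. -/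
abbrev Gen (n : ℕ) := {p : Fin n × Fin n // p.1 ≠ p.2}

/-- The generator `t_{ij}` inside the free Lie algebra. -/
def gen (n : ℕ) (i j : Fin n) (h : i ≠ j) : FreeLieAlgebra K (Gen n) :=
  FreeLieAlgebra.of K (⟨(i, j), h⟩ : Gen n)

/-- The infinitesimal braid relations. -/
def relSet (n : ℕ) : Set (FreeLieAlgebra K (Gen n)) :=
  {x | (∃ (i j : Fin n) (h : i ≠ j), x = gen K n i j h - gen K n j i h.symm) ∨
    (∃ (i j k l : Fin n) (hij : i ≠ j) (hkl : k ≠ l) (_ : i ≠ k) (_ : i ≠ l) (_ : j ≠ k)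
        (_ : j ≠ l), x = ⁅gen K n i j hij, gen K n k l hkl⁆) ∨
    (∃ (i j k : Fin n) (hij : i ≠ j) (hik : i ≠ k) (hjk : j ≠ k),
        x = ⁅gen K n i j hij, gen K n i k hik + gen K n j k hjk⁆)}

/-- The Lie ideal generated by the infinitesimal braid relations. -/
def relIdeal (n : ℕ) : LieIdeal K (FreeLieAlgebra K (Gen n)) :=
  LieSubmodule.lieSpan K _ (relSet K n)

/-- Drinfeld's Lie algebra `𝔱_n`, presented by the generators `t_{ij} = t_{ji}` and the
infinitesimal braid relations. -/
abbrev 𝔱 (n : ℕ) := FreeLieAlgebra K (Gen n) ⧸ relIdeal K n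

/-- The generator `t_{ij}` of `𝔱_n` (junk value `0` if `i = j`). -/
def tL (n : ℕ) (i j : Fin n) : 𝔱 K n :=
  if h : i = j then 0 else LieSubmodule.Quotient.mk' (relIdeal K n) (gen K n i j h)

/-- The natural Lie algebra map `FreeLie(Gen n) → 𝔱_{n+1}` sending `t_{ij}` to `t_{ij}`,
`i, j < n` (whose image is the copy of `𝔱_{n-1}` inside `𝔱_n` in the paper's indexing). -/
def inclPrev (n : ℕ) : FreeLieAlgebra K (Gen n) →ₗ⁅K⁆ 𝔱 K (n + 1) :=
  FreeLieAlgebra.lift K fun p : Gen n => tL K (n + 1) p.1.1.castSucc p.1.2.castSucc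

/-- The natural Lie algebra map from the free Lie algebra on `t_{1n}, …, t_{n−1,n}`
to `𝔱_n` (here `𝔱_{n+1}`, the last strand playing the role of `n`). -/
def inclLast (n : ℕ) : FreeLieAlgebra K (Fin n) →ₗ⁅K⁆ 𝔱 K (n + 1) :=
  FreeLieAlgebra.lift K fun α : Fin n => tL K (n + 1) α.castSucc (Fin.last n)

section Infra

variable (R : Type*) [CommRing R] {X : Type*}

open FreeLieAlgebra

/-- The free Lie algebra is generated by the generators. -/
theorem freeLie_span_top :
    LieSubalgebra.lieSpan R (FreeLieAlgebra R X) (Set.range (of R)) = ⊤ := by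
  set S := LieSubalgebra.lieSpan R (FreeLieAlgebra R X) (Set.range (of R)) with hS
  rw [eq_top_iff]
  intro a _
  let F : FreeLieAlgebra R X →ₗ⁅R⁆ S :=
    lift R fun x => ⟨of R x, LieSubalgebra.subset_lieSpan ⟨x, rfl⟩⟩
  have h : S.incl.comp F = LieHom.id := by
    apply hom_ext
    intro x
    rw [LieHom.comp_apply, lift_of_apply]
    rfl
  have := DFunLike.congr_fun h a
  simp only [LieHom.comp_apply, LieHom.id_apply] at this
  rw [← this]
  exact (F a).2

/-- A derivation of the free Lie algebra is determined by its values on generators. -/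
theorem derivation_ext {D1 D2 : LieDerivation R (FreeLieAlgebra R X) (FreeLieAlgebra R X)}
    (h : ∀ x, D1 (of R x) = D2 (of R x)) : D1 = D2 := by
  refine LieDerivation.ext_of_lieSpan_eq_top (Set.range (of R)) (freeLie_span_top R) ?_
  rintro _ ⟨x, rfl⟩
  exact h x

end Infra

set_option linter.unusedSectionVars false
set_option linter.unnecessarySeqFocus false

section MSdp

variable (R L M : Type*) [CommRing R] [LieRing L] [LieAlgebra R L]
  [AddCommGroup M] [Module R M] [LieRingModule L M] [LieModule R L M]

/-- Semidirect product of a Lie algebra with a module (viewed as abelian ideal). -/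
def MSdp (L M : Type*) := L × M

namespace MSdp

variable {R L M}

instance instACG : AddCommGroup (MSdp L M) := inferInstanceAs (AddCommGroup (L × M))
instance instMod : Module R (MSdp L M) := inferInstanceAs (Module R (L × M))

def mk (a : L) (m : M) : MSdp L M := (a, m)
def fst (p : MSdp L M) : L := Prod.fst p
def snd (p : MSdp L M) : M := Prod.snd p

@[simp] lemma fst_mk (a : L) (m : M) : (mk a m : MSdp L M).fst = a := rfl
@[simp] lemma snd_mk (a : L) (m : M) : (mk a m : MSdp L M).snd = m := rfl
@[simp] lemma fst_add (p q : MSdp L M) : (p + q).fst = p.fst + q.fst := rfl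
@[simp] lemma snd_add (p q : MSdp L M) : (p + q).snd = p.snd + q.snd := rfl
@[simp] lemma fst_smul (t : R) (p : MSdp L M) : (t • p).fst = t • p.fst := rfl
@[simp] lemma snd_smul (t : R) (p : MSdp L M) : (t • p).snd = t • p.snd := rfl
@[simp] lemma fst_zero : (0 : MSdp L M).fst = 0 := rfl
@[simp] lemma snd_zero : (0 : MSdp L M).snd = 0 := rfl

lemma ext {p q : MSdp L M} (h1 : p.fst = q.fst) (h2 : p.snd = q.snd) : p = q :=
  Prod.ext h1 h2

instance instBr : Bracket (MSdp L M) (MSdp L M) :=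
  ⟨fun p q => mk ⁅p.fst, q.fst⁆ (⁅p.fst, q.snd⁆ - ⁅q.fst, p.snd⁆)⟩

@[simp] lemma fst_lie (p q : MSdp L M) : (⁅p, q⁆ : MSdp L M).fst = ⁅p.fst, q.fst⁆ := rfl
@[simp] lemma snd_lie (p q : MSdp L M) :
    (⁅p, q⁆ : MSdp L M).snd = ⁅p.fst, q.snd⁆ - ⁅q.fst, p.snd⁆ := rfl

private lemma add_lie' (p q r : MSdp L M) : ⁅p + q, r⁆ = ⁅p, r⁆ + ⁅q, r⁆ := by
  refine ext ?_ ?_ <;> simp [add_lie] <;> abel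

private lemma lie_add' (p q r : MSdp L M) : ⁅p, q + r⁆ = ⁅p, q⁆ + ⁅p, r⁆ := by
  refine ext ?_ ?_ <;> simp [lie_add] <;> abel

private lemma lie_self' (p : MSdp L M) : ⁅p, p⁆ = 0 := by
  refine ext ?_ ?_ <;> simp

private lemma leibniz' (p q r : MSdp L M) : ⁅p, ⁅q, r⁆⁆ = ⁅⁅p, q⁆, r⁆ + ⁅q, ⁅p, r⁆⁆ := by
  refine ext ?_ ?_
  · simp only [fst_lie, fst_add]
    exact leibniz_lie _ _ _
  · simp only [fst_lie, snd_lie, fst_add, snd_add, lie_sub, sub_lie, lie_lie, lie_add, add_lie]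
    abel

instance instLieRing : LieRing (MSdp L M) :=
  { instACG, instBr with
    add_lie := add_lie'
    lie_add := lie_add'
    lie_self := lie_self'
    leibniz_lie := leibniz' }

instance instLieAlgebra : LieAlgebra R (MSdp L M) :=
  { lie_smul := fun t p q => by
      refine ext ?_ ?_ <;> simp [smul_sub] }

/-- First projection as a Lie algebra homomorphism. -/
def fstHom : MSdp L M →ₗ⁅R⁆ L :=
  { toFun := fst
    map_add' := fun _ _ => rfl
    map_smul' := fun _ _ => rfl
    map_lie' := rfl }

/-- Second projection as a linear map. -/
def sndLin : MSdp L M →ₗ[R] M :=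
  { toFun := snd
    map_add' := fun _ _ => rfl
    map_smul' := fun _ _ => rfl }

@[simp] lemma fstHom_apply (p : MSdp L M) : (fstHom : MSdp L M →ₗ⁅R⁆ L) p = p.fst := rfl
@[simp] lemma sndLin_apply (p : MSdp L M) : (sndLin : MSdp L M →ₗ[R] M) p = p.snd := rfl

end MSdp

end MSdp



section ASdp

variable {R L M : Type*} [CommRing R] [LieRing L] [LieAlgebra R L]
  [LieRing M] [LieAlgebra R M]

/-- Semidirect product of Lie algebras along an action by derivations. -/
def ASdp (ρ : L →ₗ⁅R⁆ LieDerivation R M M) := L × M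

namespace ASdp

variable {ρ : L →ₗ⁅R⁆ LieDerivation R M M}

instance instACG : AddCommGroup (ASdp ρ) := inferInstanceAs (AddCommGroup (L × M))
instance instMod : Module R (ASdp ρ) := inferInstanceAs (Module R (L × M))

def mk (a : L) (m : M) : ASdp ρ := (a, m)
def fst (p : ASdp ρ) : L := Prod.fst p
def snd (p : ASdp ρ) : M := Prod.snd p

@[simp] lemma fst_mk (a : L) (m : M) : (mk a m : ASdp ρ).fst = a := rfl
@[simp] lemma snd_mk (a : L) (m : M) : (mk a m : ASdp ρ).snd = m := rfl
@[simp] lemma fst_add (p q : ASdp ρ) : (p + q).fst = p.fst + q.fst := rfl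
@[simp] lemma snd_add (p q : ASdp ρ) : (p + q).snd = p.snd + q.snd := rfl
@[simp] lemma fst_smul (t : R) (p : ASdp ρ) : (t • p).fst = t • p.fst := rfl
@[simp] lemma snd_smul (t : R) (p : ASdp ρ) : (t • p).snd = t • p.snd := rfl
@[simp] lemma fst_zero : (0 : ASdp ρ).fst = 0 := rfl
@[simp] lemma snd_zero : (0 : ASdp ρ).snd = 0 := rfl

lemma ext {p q : ASdp ρ} (h1 : p.fst = q.fst) (h2 : p.snd = q.snd) : p = q :=
  Prod.ext h1 h2

instance instBr : Bracket (ASdp ρ) (ASdp ρ) :=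
  ⟨fun p q => mk ⁅p.fst, q.fst⁆ (ρ p.fst q.snd - ρ q.fst p.snd + ⁅p.snd, q.snd⁆)⟩

@[simp] lemma fst_lie (p q : ASdp ρ) : (⁅p, q⁆ : ASdp ρ).fst = ⁅p.fst, q.fst⁆ := rfl
@[simp] lemma snd_lie (p q : ASdp ρ) :
    (⁅p, q⁆ : ASdp ρ).snd = ρ p.fst q.snd - ρ q.fst p.snd + ⁅p.snd, q.snd⁆ := rfl

private lemma add_lie' (p q r : ASdp ρ) : ⁅p + q, r⁆ = ⁅p, r⁆ + ⁅q, r⁆ := by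
  refine ext ?_ ?_ <;>
    simp [add_lie, lie_add, map_add, LieDerivation.add_apply] <;> abel

private lemma lie_add' (p q r : ASdp ρ) : ⁅p, q + r⁆ = ⁅p, q⁆ + ⁅p, r⁆ := by
  refine ext ?_ ?_ <;>
    simp [add_lie, lie_add, map_add, LieDerivation.add_apply] <;> abel

private lemma lie_self' (p : ASdp ρ) : ⁅p, p⁆ = 0 := by
  refine ext ?_ ?_ <;> simp

private lemma leibniz'' (p q r : ASdp ρ) : ⁅p, ⁅q, r⁆⁆ = ⁅⁅p, q⁆, r⁆ + ⁅q, ⁅p, r⁆⁆ := by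
  refine ext ?_ ?_
  · simp only [fst_lie, fst_add]
    exact leibniz_lie _ _ _
  · simp only [fst_lie, snd_lie, fst_add, snd_add, LieHom.map_lie, LieDerivation.lie_apply,
      LieDerivation.apply_lie_eq_sub, map_add, map_sub, lie_add, add_lie, lie_sub, sub_lie,
      lie_lie]
    rw [show (⁅(ρ p.fst) q.snd, r.snd⁆ : M) = -⁅r.snd, (ρ p.fst) q.snd⁆ from (lie_skew _ _).symm,
      show (⁅(ρ q.fst) p.snd, r.snd⁆ : M) = -⁅r.snd, (ρ q.fst) p.snd⁆ from (lie_skew _ _).symm]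
    abel

instance instLieRing : LieRing (ASdp ρ) :=
  { instACG, instBr with
    add_lie := add_lie'
    lie_add := lie_add'
    lie_self := lie_self'
    leibniz_lie := leibniz'' }

instance instLieAlgebra : LieAlgebra R (ASdp ρ) :=
  { lie_smul := fun t p q => by
      refine ext ?_ ?_ <;> simp [smul_sub, smul_add] }

variable (ρ)

/-- Left injection, a Lie algebra morphism. -/
def inl : L →ₗ⁅R⁆ ASdp ρ :=
  { toFun := fun a => mk a 0
    map_add' := fun a b => by refine ext ?_ ?_ <;> simp
    map_smul' := fun t a => by refine ext ?_ ?_ <;> simp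
    map_lie' := fun {a b} => by refine (ext ?_ ?_).symm <;> simp }

/-- Right injection, a Lie algebra morphism. -/
def inr : M →ₗ⁅R⁆ ASdp ρ :=
  { toFun := fun m => mk 0 m
    map_add' := fun a b => by refine ext ?_ ?_ <;> simp
    map_smul' := fun t a => by refine ext ?_ ?_ <;> simp
    map_lie' := fun {a b} => by refine (ext ?_ ?_).symm <;> simp }

@[simp] lemma inl_apply (a : L) : inl ρ a = (mk a 0 : ASdp ρ) := rfl

variable {ρ}

@[simp] lemma lie_mk (a b : L) (m n : M) :
    ⁅(mk a m : ASdp ρ), mk b n⁆ = (mk ⁅a, b⁆ (ρ a n - ρ b m + ⁅m, n⁆) : ASdp ρ) := rfl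

@[simp] lemma mk_add_mk (a b : L) (m n : M) :
    (mk a m : ASdp ρ) + mk b n = (mk (a + b) (m + n) : ASdp ρ) := rfl

lemma mk_eq_zero_iff {a : L} {m : M} : (mk a m : ASdp ρ) = 0 ↔ a = 0 ∧ m = 0 := by
  constructor
  · intro h
    exact ⟨congrArg (fst (ρ := ρ)) h, congrArg (snd (ρ := ρ)) h⟩
  · rintro ⟨rfl, rfl⟩
    rfl

variable (ρ)
@[simp] lemma inr_apply (m : M) : inr ρ m = (mk 0 m : ASdp ρ) := rfl

end ASdp

end ASdp

section DerExt

variable (R : Type*) [CommRing R] {X : Type*}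

open FreeLieAlgebra

def derAux (f : X → FreeLieAlgebra R X) :
    FreeLieAlgebra R X →ₗ⁅R⁆ MSdp (FreeLieAlgebra R X) (FreeLieAlgebra R X) :=
  lift R fun x => MSdp.mk (of R x) (f x)

lemma derAux_fst (f : X → FreeLieAlgebra R X) (u : FreeLieAlgebra R X) :
    (derAux R f u).fst = u := by
  have h : (MSdp.fstHom : MSdp (FreeLieAlgebra R X) (FreeLieAlgebra R X) →ₗ⁅R⁆ _).comp
      (derAux R f) = LieHom.id := by
    apply hom_ext
    intro x
    rw [LieHom.comp_apply, derAux, lift_of_apply]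
    rfl
  exact DFunLike.congr_fun h u

/-- The derivation of the free Lie algebra with prescribed values on generators. -/
def lieDerOfGens (f : X → FreeLieAlgebra R X) :
    LieDerivation R (FreeLieAlgebra R X) (FreeLieAlgebra R X) where
  toLinearMap := MSdp.sndLin.comp (derAux R f).toLinearMap
  leibniz' := fun a b => by
    have h : derAux R f ⁅a, b⁆ = ⁅derAux R f a, derAux R f b⁆ := (derAux R f).map_lie a b
    have h2 := congrArg MSdp.snd h
    simp only [MSdp.snd_lie, derAux_fst] at h2
    simpa using h2

@[simp] lemma lieDerOfGens_apply_of (f : X → FreeLieAlgebra R X) (x : X) :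
    lieDerOfGens R f (of R x) = f x := by
  show (MSdp.sndLin : MSdp (FreeLieAlgebra R X) (FreeLieAlgebra R X) →ₗ[R] _) ((derAux R f) (of R x)) = f x
  rw [derAux, lift_of_apply]
  rfl

end DerExt

section Quot

variable {R : Type*} [CommRing R] {L : Type*} [LieRing L] [LieAlgebra R L]
  (I : LieIdeal R L) {L' : Type*} [LieRing L'] [LieAlgebra R L']

/-- Quotient map as a Lie algebra homomorphism. -/
def mkL : L →ₗ⁅R⁆ L ⧸ I where
  toLinearMap := (LieSubmodule.Quotient.mk' I : L →ₗ⁅R,L⁆ L ⧸ I).toLinearMap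
  map_lie' := fun {x y} => by
    exact (LieSubmodule.Quotient.mk_bracket I x y)

lemma mkL_eq (x : L) : mkL I x = LieSubmodule.Quotient.mk' I x := rfl

/-- Descend a Lie algebra map vanishing on an ideal to the quotient. -/
def descend (f : L →ₗ⁅R⁆ L') (h : ∀ x ∈ I, f x = 0) : L ⧸ I →ₗ⁅R⁆ L' where
  toLinearMap := Submodule.liftQ I.toSubmodule f.toLinearMap fun x hx => h x hx
  map_lie' := by
    intro x y
    obtain ⟨a, rfl⟩ := LieSubmodule.Quotient.surjective_mk' I x
    obtain ⟨b, rfl⟩ := LieSubmodule.Quotient.surjective_mk' I y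
    rw [← mkL_eq, ← mkL_eq, ← LieHom.map_lie (mkL I)]
    exact f.map_lie a b

@[simp] lemma descend_mk (f : L →ₗ⁅R⁆ L') (h : ∀ x ∈ I, f x = 0) (x : L) :
    descend I f h (mkL I x) = f x := rfl

lemma vanish_of_span {s : Set L} (f : L →ₗ⁅R⁆ L') (h : ∀ x ∈ s, f x = 0) :
    ∀ x ∈ (LieSubmodule.lieSpan R L s : LieIdeal R L), f x = 0 := by
  intro x hx
  have hle : (LieSubmodule.lieSpan R L s : LieIdeal R L) ≤ f.ker := by
    rw [LieSubmodule.lieSpan_le]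
    intro y hy
    exact LieHom.mem_ker.mpr (h y hy)
  exact LieHom.mem_ker.mp (hle hx)

theorem quot_hom_ext {f g : L ⧸ I →ₗ⁅R⁆ L'} (h : ∀ x, f (mkL I x) = g (mkL I x)) : f = g := by
  apply LieHom.ext
  intro y
  obtain ⟨a, rfl⟩ := LieSubmodule.Quotient.surjective_mk' I y
  exact h a

open FreeLieAlgebra in
theorem quot_free_hom_ext {X : Type*} {I : LieIdeal R (FreeLieAlgebra R X)}
    {f g : FreeLieAlgebra R X ⧸ I →ₗ⁅R⁆ L'}
    (h : ∀ x : X, f (mkL I (of R x)) = g (mkL I (of R x))) : f = g := by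
  apply quot_hom_ext
  have h2 : f.comp (mkL I) = g.comp (mkL I) := hom_ext fun x => h x
  intro x
  exact DFunLike.congr_fun h2 x

open FreeLieAlgebra in
theorem quot_span_top {X : Type*} (I : LieIdeal R (FreeLieAlgebra R X)) :
    LieSubalgebra.lieSpan R (FreeLieAlgebra R X ⧸ I)
      (Set.range fun x => mkL I (of R x)) = ⊤ := by
  rw [eq_top_iff]
  intro y _
  obtain ⟨a, rfl⟩ := LieSubmodule.Quotient.surjective_mk' I y
  have hle : LieSubalgebra.lieSpan R (FreeLieAlgebra R X) (Set.range (of R)) ≤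
      (LieSubalgebra.lieSpan R (FreeLieAlgebra R X ⧸ I)
        (Set.range fun x => mkL I (of R x))).comap (mkL I) := by
    rw [LieSubalgebra.lieSpan_le]
    rintro _ ⟨x, rfl⟩
    exact LieSubalgebra.subset_lieSpan ⟨x, rfl⟩
  exact hle (by rw [freeLie_span_top R]; trivial)

end Quot

section Main

open FreeLieAlgebra

variable (K : Type*) [Field K] [CharZero K]

/-- Abbreviation for the free Lie algebra on `Fin n`. -/
abbrev FL (n : ℕ) := FreeLieAlgebra K (Fin n)

/-- The derivation `d_{ij}` of the free Lie algebra on `t_{1n}, …, t_{n-1,n}`. -/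
def dgen (n : ℕ) (i j : Fin n) : LieDerivation K (FL K n) (FL K n) :=
  lieDerOfGens K fun α =>
    if α = i then ⁅of K i, of K j⁆ else if α = j then ⁅of K j, of K i⁆ else 0

@[simp] lemma dgen_of (n : ℕ) (i j α : Fin n) :
    dgen K n i j (of K α) =
      if α = i then ⁅of K i, of K j⁆ else if α = j then ⁅of K j, of K i⁆ else 0 :=
  lieDerOfGens_apply_of K _ α

lemma dgen_symm {n : ℕ} {i j : Fin n} (h : i ≠ j) : dgen K n i j = dgen K n j i := by
  apply derivation_ext K
  intro α
  rcases eq_or_ne α i with rfl | h1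
  · simp [h, h.symm]
  rcases eq_or_ne α j with rfl | h2
  · simp [h, h.symm]
  · simp [h1, h2]

lemma dgen_disjoint {n : ℕ} {i j k l : Fin n} (hij : i ≠ j) (hkl : k ≠ l) (hik : i ≠ k)
    (hil : i ≠ l) (hjk : j ≠ k) (hjl : j ≠ l) :
    ⁅dgen K n i j, dgen K n k l⁆ = 0 := by
  apply derivation_ext K
  intro α
  rw [LieDerivation.lie_apply, LieDerivation.zero_apply]
  rcases eq_or_ne α i with rfl | h1
  · simp [hik, hil, hjk, hjl, Ne.symm hik, Ne.symm hil, Ne.symm hjk, Ne.symm hjl,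
      LieDerivation.apply_lie_eq_add]
  rcases eq_or_ne α j with rfl | h2
  · simp [h1, hik, hil, hjk, hjl, Ne.symm hik, Ne.symm hil, Ne.symm hjk, Ne.symm hjl,
      LieDerivation.apply_lie_eq_add]
  rcases eq_or_ne α k with rfl | h3
  · simp [h1, h2, hik, hil, hjk, hjl, Ne.symm hik, Ne.symm hil, Ne.symm hjk, Ne.symm hjl,
      LieDerivation.apply_lie_eq_add]
  rcases eq_or_ne α l with rfl | h4
  · simp [h1, h2, hkl, Ne.symm hkl, hik, hil, hjk, hjl, Ne.symm hik, Ne.symm hil, Ne.symm hjk,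
      Ne.symm hjl, LieDerivation.apply_lie_eq_add]
  · simp [h1, h2, h3, h4]

lemma cyc3 {L : Type*} [LieRing L] (a b c : L) :
    ⁅c, ⁅a, b⁆⁆ = ⁅a, ⁅c, b⁆⁆ + ⁅b, ⁅a, c⁆⁆ := by
  have h1 : ⁅c, ⁅a, b⁆⁆ = -⁅⁅a, b⁆, c⁆ := (lie_skew _ _).symm
  rw [h1, lie_lie, ← lie_skew b c, lie_neg, neg_sub, ← lie_skew a c]
  abel

lemma dgen_triple {n : ℕ} {i j k : Fin n} (hij : i ≠ j) (hik : i ≠ k) (hjk : j ≠ k) :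
    ⁅dgen K n i j, dgen K n i k + dgen K n j k⁆ = 0 := by
  apply derivation_ext K
  intro α
  rw [LieDerivation.lie_apply, LieDerivation.zero_apply]
  rcases eq_or_ne α i with rfl | h1
  · simp [hij, hik, hjk, Ne.symm hij, Ne.symm hik, Ne.symm hjk,
      LieDerivation.apply_lie_eq_add]
  rcases eq_or_ne α j with rfl | h2
  · simp [h1, hij, hik, hjk, Ne.symm hij, Ne.symm hik, Ne.symm hjk,
      LieDerivation.apply_lie_eq_add]
  rcases eq_or_ne α k with rfl | h3
  · simp [h1, h2, hij, hik, hjk, Ne.symm hij, Ne.symm hik, Ne.symm hjk,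
      LieDerivation.apply_lie_eq_add]
    rw [← lie_skew (of K j) (of K i), lie_neg, add_neg_cancel]
  · simp [h1, h2, h3]

lemma mk_rel {n : ℕ} {x : FreeLieAlgebra K (Gen n)} (h : x ∈ relSet K n) :
    mkL (relIdeal K n) x = 0 := by
  rw [mkL_eq]
  exact (LieSubmodule.Quotient.mk_eq_zero _).mpr (LieSubmodule.subset_lieSpan h)

lemma tL_eq {n : ℕ} {i j : Fin n} (h : i ≠ j) :
    tL K n i j = mkL (relIdeal K n) (gen K n i j h) := dif_neg h

lemma tL_symm {n : ℕ} {i j : Fin n} (h : i ≠ j) : tL K n i j = tL K n j i := by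
  rw [tL_eq K h, tL_eq K h.symm, ← sub_eq_zero, ← map_sub (mkL (relIdeal K n))]
  exact mk_rel K (Or.inl ⟨i, j, h, rfl⟩)

lemma tL_disjoint {n : ℕ} {i j k l : Fin n} (hij : i ≠ j) (hkl : k ≠ l) (hik : i ≠ k)
    (hil : i ≠ l) (hjk : j ≠ k) (hjl : j ≠ l) : ⁅tL K n i j, tL K n k l⁆ = 0 := by
  rw [tL_eq K hij, tL_eq K hkl, ← LieHom.map_lie]
  exact mk_rel K (Or.inr (Or.inl ⟨i, j, k, l, hij, hkl, hik, hil, hjk, hjl, rfl⟩))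

lemma tL_triple {n : ℕ} {i j k : Fin n} (hij : i ≠ j) (hik : i ≠ k) (hjk : j ≠ k) :
    ⁅tL K n i j, tL K n i k + tL K n j k⁆ = 0 := by
  rw [tL_eq K hij, tL_eq K hik, tL_eq K hjk, ← map_add (mkL (relIdeal K n)), ← LieHom.map_lie]
  exact mk_rel K (Or.inr (Or.inr ⟨i, j, k, hij, hik, hjk, rfl⟩))

def ρaux (n : ℕ) : FreeLieAlgebra K (Gen n) →ₗ⁅K⁆ LieDerivation K (FL K n) (FL K n) :=
  lift K fun p : Gen n => dgen K n p.1.1 p.1.2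

lemma ρaux_gen {n : ℕ} {i j : Fin n} (h : i ≠ j) :
    ρaux K n (gen K n i j h) = dgen K n i j := lift_of_apply _ _

lemma ρaux_rel (n : ℕ) : ∀ x ∈ relSet K n, ρaux K n x = 0 := by
  rintro x (⟨i, j, h, rfl⟩ | ⟨i, j, k, l, hij, hkl, hik, hil, hjk, hjl, rfl⟩ |
    ⟨i, j, k, hij, hik, hjk, rfl⟩)
  · rw [map_sub, ρaux_gen K h, ρaux_gen K h.symm, dgen_symm K h, sub_self]
  · rw [LieHom.map_lie, ρaux_gen K hij, ρaux_gen K hkl]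
    exact dgen_disjoint K hij hkl hik hil hjk hjl
  · rw [LieHom.map_lie, map_add, ρaux_gen K hij, ρaux_gen K hik, ρaux_gen K hjk]
    exact dgen_triple K hij hik hjk

/-- The action of `𝔱_n` on the free Lie algebra by derivations. -/
def ρT (n : ℕ) : 𝔱 K n →ₗ⁅K⁆ LieDerivation K (FL K n) (FL K n) :=
  descend (relIdeal K n) (ρaux K n) (vanish_of_span (ρaux K n) (ρaux_rel K n))

lemma ρT_tL {n : ℕ} {i j : Fin n} (h : i ≠ j) : ρT K n (tL K n i j) = dgen K n i j := by
  rw [tL_eq K h]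
  exact (descend_mk _ _ _ _).trans (ρaux_gen K h)

lemma castPred_ne {n : ℕ} {i j : Fin (n + 1)} (hi : i ≠ Fin.last n) (hj : j ≠ Fin.last n)
    (h : i ≠ j) : i.castPred hi ≠ j.castPred hj := fun he =>
  h (by rw [← Fin.castSucc_castPred i hi, ← Fin.castSucc_castPred j hj, he])

/-- Images in the semidirect product of the generators of `𝔱_{n+1}`. -/
def gmap (n : ℕ) (i j : Fin (n + 1)) : ASdp (ρT K n) :=
  if hj : j = Fin.last n then
    (if hi : i = Fin.last n then 0 else ASdp.mk 0 (of K (i.castPred hi)))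
  else if hi : i = Fin.last n then ASdp.mk 0 (of K (j.castPred hj))
  else ASdp.mk (tL K n (i.castPred hi) (j.castPred hj)) 0

lemma gmap_small {n : ℕ} {i j : Fin (n + 1)} (hi : i ≠ Fin.last n) (hj : j ≠ Fin.last n) :
    gmap K n i j = ASdp.mk (tL K n (i.castPred hi) (j.castPred hj)) 0 := by
  rw [gmap, dif_neg hj, dif_neg hi]

lemma gmap_last_right {n : ℕ} {i : Fin (n + 1)} (hi : i ≠ Fin.last n) :
    gmap K n i (Fin.last n) = ASdp.mk 0 (of K (i.castPred hi)) := by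
  rw [gmap, dif_pos rfl, dif_neg hi]

lemma gmap_last_left {n : ℕ} {j : Fin (n + 1)} (hj : j ≠ Fin.last n) :
    gmap K n (Fin.last n) j = ASdp.mk 0 (of K (j.castPred hj)) := by
  rw [gmap, dif_neg hj, dif_pos rfl]

lemma gmap_symm {n : ℕ} {i j : Fin (n + 1)} (h : i ≠ j) : gmap K n i j = gmap K n j i := by
  by_cases hi : i = Fin.last n
  · subst hi
    have hj : j ≠ Fin.last n := fun hh => h hh.symm
    rw [gmap_last_left K hj, gmap_last_right K hj]
  · by_cases hj : j = Fin.last n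
    · subst hj
      rw [gmap_last_left K hi, gmap_last_right K hi]
    · rw [gmap_small K hi hj, gmap_small K hj hi, tL_symm K (castPred_ne hi hj h)]

def ψaux (n : ℕ) : FreeLieAlgebra K (Gen (n + 1)) →ₗ⁅K⁆ ASdp (ρT K n) :=
  lift K fun q : Gen (n + 1) => gmap K n q.1.1 q.1.2

lemma ψaux_gen {n : ℕ} {i j : Fin (n + 1)} (h : i ≠ j) :
    ψaux K n (gen K (n + 1) i j h) = gmap K n i j := lift_of_apply _ _

lemma ψaux_rel (n : ℕ) : ∀ x ∈ relSet K (n + 1), ψaux K n x = 0 := by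
  rintro x (⟨i, j, h, rfl⟩ | ⟨i, j, k, l, hij, hkl, hik, hil, hjk, hjl, rfl⟩ |
    ⟨i, j, k, hij, hik, hjk, rfl⟩)
  · rw [map_sub, ψaux_gen K h, ψaux_gen K h.symm, gmap_symm K h, sub_self]
  · rw [LieHom.map_lie, ψaux_gen K hij, ψaux_gen K hkl]
    by_cases hi : i = Fin.last n
    · subst hi
      have hj : j ≠ Fin.last n := fun hh => hij hh.symm
      have hk : k ≠ Fin.last n := fun hh => hik hh.symm
      have hl : l ≠ Fin.last n := fun hh => hil hh.symm
      rw [gmap_last_left K hj, gmap_small K hk hl, ASdp.lie_mk]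
      rw [ASdp.mk_eq_zero_iff]
      refine ⟨by simp, ?_⟩
      simp [ρT_tL K (castPred_ne hk hl hkl), castPred_ne hj hk hjk, castPred_ne hj hl hjl]
    by_cases hj : j = Fin.last n
    · subst hj
      have hk : k ≠ Fin.last n := fun hh => hjk hh.symm
      have hl : l ≠ Fin.last n := fun hh => hjl hh.symm
      rw [gmap_last_right K hi, gmap_small K hk hl, ASdp.lie_mk]
      rw [ASdp.mk_eq_zero_iff]
      refine ⟨by simp, ?_⟩
      simp [ρT_tL K (castPred_ne hk hl hkl), castPred_ne hi hk hik, castPred_ne hi hl hil]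
    by_cases hk : k = Fin.last n
    · subst hk
      have hl : l ≠ Fin.last n := fun hh => hkl hh.symm
      rw [gmap_last_left K hl, gmap_small K hi hj, ASdp.lie_mk]
      rw [ASdp.mk_eq_zero_iff]
      refine ⟨by simp, ?_⟩
      simp [ρT_tL K (castPred_ne hi hj hij), castPred_ne hl hi (fun hh => hil hh.symm),
        castPred_ne hl hj (fun hh => hjl hh.symm)]
    by_cases hl : l = Fin.last n
    · subst hl
      rw [gmap_last_right K hk, gmap_small K hi hj, ASdp.lie_mk]
      rw [ASdp.mk_eq_zero_iff]
      refine ⟨by simp, ?_⟩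
      simp [ρT_tL K (castPred_ne hi hj hij), castPred_ne hk hi (fun hh => hik hh.symm),
        castPred_ne hk hj (fun hh => hjk hh.symm)]
    · rw [gmap_small K hi hj, gmap_small K hk hl, ASdp.lie_mk, ASdp.mk_eq_zero_iff]
      refine ⟨tL_disjoint K (castPred_ne hi hj hij) (castPred_ne hk hl hkl)
        (castPred_ne hi hk hik) (castPred_ne hi hl hil) (castPred_ne hj hk hjk)
        (castPred_ne hj hl hjl), by simp⟩
  · rw [LieHom.map_lie, map_add, ψaux_gen K hij, ψaux_gen K hik, ψaux_gen K hjk]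
    by_cases hi : i = Fin.last n
    · subst hi
      have hj : j ≠ Fin.last n := fun hh => hij hh.symm
      have hk : k ≠ Fin.last n := fun hh => hik hh.symm
      rw [gmap_last_left K hj, gmap_last_left K hk, gmap_small K hj hk, ASdp.mk_add_mk,
        ASdp.lie_mk, ASdp.mk_eq_zero_iff]
      refine ⟨by simp, ?_⟩
      simp [ρT_tL K (castPred_ne hj hk hjk)]
      rw [← lie_skew (of K (j.castPred hj)) (of K (k.castPred hk)), add_neg_cancel]
    by_cases hj : j = Fin.last n
    · subst hj
      have hk : k ≠ Fin.last n := fun hh => hjk hh.symm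
      rw [gmap_last_right K hi, gmap_small K hi hk, gmap_last_left K hk, ASdp.mk_add_mk,
        ASdp.lie_mk, ASdp.mk_eq_zero_iff]
      refine ⟨by simp, ?_⟩
      simp [ρT_tL K (castPred_ne hi hk hik)]
      rw [← lie_skew (of K (i.castPred hi)) (of K (k.castPred hk)), add_neg_cancel]
    by_cases hk : k = Fin.last n
    · subst hk
      rw [gmap_small K hi hj, gmap_last_right K hi, gmap_last_right K hj, ASdp.mk_add_mk,
        ASdp.lie_mk, ASdp.mk_eq_zero_iff]
      refine ⟨by simp, ?_⟩
      have hcp := castPred_ne hi hj hij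
      rw [ρT_tL K hcp, map_add]
      simp [hcp, Ne.symm hcp]
      rw [← lie_skew (of K (i.castPred hi)) (of K (j.castPred hj))]
      abel
    · rw [gmap_small K hi hj, gmap_small K hi hk, gmap_small K hj hk, ASdp.mk_add_mk,
        ASdp.lie_mk, ASdp.mk_eq_zero_iff]
      exact ⟨tL_triple K (castPred_ne hi hj hij) (castPred_ne hi hk hik)
        (castPred_ne hj hk hjk), by simp⟩

/-- The Lie algebra morphism `𝔱_{n+1} → 𝔱_n ⋉ FreeLie`. -/
def Ψ (n : ℕ) : 𝔱 K (n + 1) →ₗ⁅K⁆ ASdp (ρT K n) :=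
  descend (relIdeal K (n + 1)) (ψaux K n) (vanish_of_span (ψaux K n) (ψaux_rel K n))

lemma inclPrev_gen {n : ℕ} {i j : Fin n} (h : i ≠ j) :
    inclPrev K n (gen K n i j h) = tL K (n + 1) i.castSucc j.castSucc := lift_of_apply _ _

lemma castSucc_ne {n : ℕ} {i j : Fin n} (h : i ≠ j) :
    i.castSucc ≠ j.castSucc := fun he => h (Fin.castSucc_inj.mp he)

lemma inclPrev_rel (n : ℕ) : ∀ x ∈ relSet K n, inclPrev K n x = 0 := by
  rintro x (⟨i, j, h, rfl⟩ | ⟨i, j, k, l, hij, hkl, hik, hil, hjk, hjl, rfl⟩ |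
    ⟨i, j, k, hij, hik, hjk, rfl⟩)
  · rw [map_sub, inclPrev_gen K h, inclPrev_gen K h.symm, tL_symm K (castSucc_ne h), sub_self]
  · rw [LieHom.map_lie, inclPrev_gen K hij, inclPrev_gen K hkl]
    exact tL_disjoint K (castSucc_ne hij) (castSucc_ne hkl) (castSucc_ne hik)
      (castSucc_ne hil) (castSucc_ne hjk) (castSucc_ne hjl)
  · rw [LieHom.map_lie, map_add, inclPrev_gen K hij, inclPrev_gen K hik, inclPrev_gen K hjk]
    exact tL_triple K (castSucc_ne hij) (castSucc_ne hik) (castSucc_ne hjk)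

/-- The Lie algebra morphism `𝔱_n → 𝔱_{n+1}`. -/
def inclPrev' (n : ℕ) : 𝔱 K n →ₗ⁅K⁆ 𝔱 K (n + 1) :=
  descend (relIdeal K n) (inclPrev K n) (vanish_of_span (inclPrev K n) (inclPrev_rel K n))

end Main

section Ideal

variable {R : Type*} [CommRing R] {L : Type*} [LieRing L] [LieAlgebra R L]

/-- The `y`-stabilized part of a Lie subalgebra. -/
def stab (S : LieSubalgebra R L) (y : L) : LieSubalgebra R L where
  toSubmodule :=
    { carrier := {x | x ∈ S ∧ ⁅y, x⁆ ∈ S}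
      add_mem' := fun {a b} ha hb =>
        ⟨S.add_mem ha.1 hb.1, by rw [lie_add]; exact S.add_mem ha.2 hb.2⟩
      zero_mem' := ⟨S.zero_mem, by rw [lie_zero]; exact S.zero_mem⟩
      smul_mem' := fun t a ha =>
        ⟨S.smul_mem t ha.1, by rw [lie_smul]; exact S.smul_mem t ha.2⟩ }
  lie_mem' := fun {a b} ha hb =>
    ⟨S.lie_mem ha.1 hb.1, by
      rw [leibniz_lie]
      exact S.add_mem (S.lie_mem ha.2 hb.1) (S.lie_mem ha.1 hb.2)⟩

lemma mem_stab {S : LieSubalgebra R L} {y x : L} :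
    x ∈ stab S y ↔ x ∈ S ∧ ⁅y, x⁆ ∈ S := Iff.rfl

/-- The idealizer of a Lie subalgebra. -/
def idlz (S : LieSubalgebra R L) : LieSubalgebra R L where
  toSubmodule :=
    { carrier := {y | ∀ x ∈ S, ⁅y, x⁆ ∈ S}
      add_mem' := fun {a b} ha hb x hx => by
        rw [add_lie]; exact S.add_mem (ha x hx) (hb x hx)
      zero_mem' := fun x hx => by rw [zero_lie]; exact S.zero_mem
      smul_mem' := fun t a ha x hx => by rw [smul_lie]; exact S.smul_mem t (ha x hx) }
  lie_mem' := fun {a b} ha hb x hx => by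
    rw [lie_lie]
    exact S.sub_mem (ha _ (hb x hx)) (hb _ (ha x hx))

lemma mem_idlz {S : LieSubalgebra R L} {y : L} :
    y ∈ idlz S ↔ ∀ x ∈ S, ⁅y, x⁆ ∈ S := Iff.rfl

end Ideal

section Main2

open FreeLieAlgebra

variable (K : Type*) [Field K] [CharZero K]

/-- The generators `t_{αn}` of the last-strand free Lie subalgebra. -/
def genSet (n : ℕ) : Set (𝔱 K (n + 1)) :=
  {z | ∃ α : Fin n, z = tL K (n + 1) α.castSucc (Fin.last n)}

/-- The Lie subalgebra generated by the `t_{αn}`. -/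
abbrev Lsp (n : ℕ) : LieSubalgebra K (𝔱 K (n + 1)) :=
  LieSubalgebra.lieSpan K (𝔱 K (n + 1)) (genSet K n)

lemma tL_mem_genSet {n : ℕ} {i : Fin (n + 1)} (hi : i ≠ Fin.last n) :
    tL K (n + 1) i (Fin.last n) ∈ genSet K n :=
  ⟨i.castPred hi, by rw [Fin.castSucc_castPred]⟩

lemma lie_gen_mem {n : ℕ} {i j : Fin (n + 1)} (hij : i ≠ j) :
    ∀ x ∈ Lsp K n, ⁅tL K (n + 1) i j, x⁆ ∈ Lsp K n := by
  intro x hx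
  have h1 : Lsp K n ≤ stab (Lsp K n) (tL K (n + 1) i j) := by
    apply LieSubalgebra.lieSpan_le.mpr
    rintro z ⟨α, rfl⟩
    have hcs : α.castSucc ≠ Fin.last n := (Fin.castSucc_lt_last α).ne
    refine ⟨LieSubalgebra.subset_lieSpan ⟨α, rfl⟩, ?_⟩
    by_cases hj : j = Fin.last n
    · subst hj
      exact (Lsp K n).lie_mem
        (LieSubalgebra.subset_lieSpan (tL_mem_genSet K hij))
        (LieSubalgebra.subset_lieSpan ⟨α, rfl⟩)
    by_cases hi : i = Fin.last n
    · subst hi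
      rw [tL_symm K hij]
      exact (Lsp K n).lie_mem
        (LieSubalgebra.subset_lieSpan (tL_mem_genSet K hj))
        (LieSubalgebra.subset_lieSpan ⟨α, rfl⟩)
    by_cases hαi : α.castSucc = i
    · subst hαi
      have h3 : ⁅tL K (n + 1) α.castSucc (Fin.last n),
          tL K (n + 1) α.castSucc j + tL K (n + 1) (Fin.last n) j⁆ = 0 :=
        tL_triple K hcs hij (Ne.symm hj)
      rw [lie_add, add_eq_zero_iff_eq_neg] at h3
      have h4 : ⁅tL K (n + 1) α.castSucc j, tL K (n + 1) α.castSucc (Fin.last n)⁆ =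
          ⁅tL K (n + 1) α.castSucc (Fin.last n), tL K (n + 1) j (Fin.last n)⁆ := by
        rw [← lie_skew, h3, neg_neg, tL_symm K (Ne.symm hj)]
      rw [h4]
      exact (Lsp K n).lie_mem
        (LieSubalgebra.subset_lieSpan ⟨α, rfl⟩)
        (LieSubalgebra.subset_lieSpan (tL_mem_genSet K hj))
    by_cases hαj : α.castSucc = j
    · subst hαj
      rw [tL_symm K hij]
      have h3 : ⁅tL K (n + 1) α.castSucc (Fin.last n),
          tL K (n + 1) α.castSucc i + tL K (n + 1) (Fin.last n) i⁆ = 0 :=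
        tL_triple K hcs (Ne.symm hij) (Ne.symm hi)
      rw [lie_add, add_eq_zero_iff_eq_neg] at h3
      have h4 : ⁅tL K (n + 1) α.castSucc i, tL K (n + 1) α.castSucc (Fin.last n)⁆ =
          ⁅tL K (n + 1) α.castSucc (Fin.last n), tL K (n + 1) i (Fin.last n)⁆ := by
        rw [← lie_skew, h3, neg_neg, tL_symm K (Ne.symm hi)]
      rw [h4]
      exact (Lsp K n).lie_mem
        (LieSubalgebra.subset_lieSpan ⟨α, rfl⟩)
        (LieSubalgebra.subset_lieSpan (tL_mem_genSet K hi))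
    · rw [tL_disjoint K hij hcs (Ne.symm hαi) hi (Ne.symm hαj) hj]
      exact (Lsp K n).zero_mem
  exact (h1 hx).2

theorem part1 (n : ℕ) : ∀ y x : 𝔱 K (n + 1), x ∈ Lsp K n → ⁅y, x⁆ ∈ Lsp K n := by
  intro y x hx
  have htop : (⊤ : LieSubalgebra K (𝔱 K (n + 1))) ≤ idlz (Lsp K n) := by
    rw [← quot_span_top (relIdeal K (n + 1))]
    apply LieSubalgebra.lieSpan_le.mpr
    rintro _ ⟨q, rfl⟩
    obtain ⟨⟨i, j⟩, hij⟩ := q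
    have he : mkL (relIdeal K (n + 1)) (of K (⟨(i, j), hij⟩ : Gen (n + 1))) =
        tL K (n + 1) i j := (tL_eq K hij).symm
    refine mem_idlz.mpr fun x hx => ?_
    show ⁅(mkL (relIdeal K (n + 1))) (of K ⟨(i, j), hij⟩), x⁆ ∈ Lsp K n
    rw [he]
    exact lie_gen_mem K hij x hx
  exact (htop (LieSubalgebra.mem_top y)) x hx

end Main2

section Main3

open FreeLieAlgebra

variable (K : Type*) [Field K] [CharZero K]

lemma inclLast_of {n : ℕ} (α : Fin n) :
    inclLast K n (of K α) = tL K (n + 1) α.castSucc (Fin.last n) := lift_of_apply _ _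

lemma inclLast_mem {n : ℕ} (u : FL K n) : inclLast K n u ∈ Lsp K n := by
  have hle : LieSubalgebra.lieSpan K (FL K n) (Set.range (of K)) ≤
      (Lsp K n).comap (inclLast K n) := by
    apply LieSubalgebra.lieSpan_le.mpr
    rintro _ ⟨α, rfl⟩
    show inclLast K n (of K α) ∈ Lsp K n
    rw [inclLast_of]
    exact LieSubalgebra.subset_lieSpan ⟨α, rfl⟩
  exact hle (by rw [freeLie_span_top K]; exact LieSubalgebra.mem_top _)

lemma mem_range_of_mem_Lsp {n : ℕ} {x : 𝔱 K (n + 1)} (hx : x ∈ Lsp K n) :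
    ∃ u : FL K n, inclLast K n u = x := by
  have hle : Lsp K n ≤ (inclLast K n).range := by
    apply LieSubalgebra.lieSpan_le.mpr
    rintro z ⟨α, rfl⟩
    exact (LieHom.mem_range _ _).mpr ⟨of K α, inclLast_of K α⟩
  exact (LieHom.mem_range _ _).mp (hle hx)

/-- The candidate linear isomorphism. -/
def Θ (n : ℕ) : (𝔱 K n × FL K n) →ₗ[K] 𝔱 K (n + 1) :=
  (inclPrev' K n).toLinearMap.comp (LinearMap.fst K _ _) +
    (inclLast K n).toLinearMap.comp (LinearMap.snd K _ _)

lemma Θ_apply {n : ℕ} (a : 𝔱 K n) (u : FL K n) :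
    Θ K n (a, u) = inclPrev' K n a + inclLast K n u := rfl

/-- The range of `Θ` is closed under brackets. -/
def rng (n : ℕ) : LieSubalgebra K (𝔱 K (n + 1)) where
  toSubmodule := LinearMap.range (Θ K n)
  lie_mem' := by
    intro x y hx hy
    obtain ⟨⟨a, u⟩, rfl⟩ := hx
    obtain ⟨⟨b, v⟩, rfl⟩ := hy
    have hsum : ⁅inclPrev' K n a, inclLast K n v⁆ +
        (⁅inclLast K n u, inclPrev' K n b⁆ + ⁅inclLast K n u, inclLast K n v⁆) ∈ Lsp K n := by
      refine (Lsp K n).add_mem (part1 K n _ _ (inclLast_mem K v)) ((Lsp K n).add_mem ?_ ?_)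
      · rw [← lie_skew]
        exact (Lsp K n).neg_mem (part1 K n _ _ (inclLast_mem K u))
      · rw [← LieHom.map_lie]
        exact inclLast_mem K _
    obtain ⟨w, hw⟩ := mem_range_of_mem_Lsp K hsum
    refine ⟨(⁅a, b⁆, w), ?_⟩
    show Θ K n (⁅a, b⁆, w) = _
    rw [Θ_apply, LieHom.map_lie, hw, Θ_apply, Θ_apply, lie_add, add_lie, add_lie]
    abel

lemma Θ_surjective (n : ℕ) : Function.Surjective (Θ K n) := by
  intro z
  have htop : (⊤ : LieSubalgebra K (𝔱 K (n + 1))) ≤ rng K n := by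
    rw [← quot_span_top (relIdeal K (n + 1))]
    apply LieSubalgebra.lieSpan_le.mpr
    rintro _ ⟨q, rfl⟩
    obtain ⟨⟨i, j⟩, hij⟩ := q
    show mkL (relIdeal K (n + 1)) (of K ⟨(i, j), hij⟩) ∈ rng K n
    rw [show mkL (relIdeal K (n + 1)) (of K (⟨(i, j), hij⟩ : Gen (n + 1))) =
        tL K (n + 1) i j from (tL_eq K hij).symm]
    by_cases hj : j = Fin.last n
    · subst hj
      refine ⟨(0, of K (i.castPred hij)), ?_⟩
      show Θ K n (0, of K (i.castPred hij)) = _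
      rw [Θ_apply, map_zero, zero_add, inclLast_of, Fin.castSucc_castPred]
    by_cases hi : i = Fin.last n
    · subst hi
      rw [tL_symm K hij]
      refine ⟨(0, of K (j.castPred hj)), ?_⟩
      show Θ K n (0, of K (j.castPred hj)) = _
      rw [Θ_apply, map_zero, zero_add, inclLast_of, Fin.castSucc_castPred]
    · refine ⟨(mkL (relIdeal K n)
        (gen K n (i.castPred hi) (j.castPred hj) (castPred_ne hi hj hij)), 0), ?_⟩
      show Θ K n (_, (0 : FL K n)) = _
      rw [Θ_apply, map_zero, add_zero]
      show inclPrev K n (gen K n (i.castPred hi) (j.castPred hj) (castPred_ne hi hj hij)) = _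
      rw [inclPrev_gen, Fin.castSucc_castPred, Fin.castSucc_castPred]
  obtain ⟨w, hw⟩ := htop (LieSubalgebra.mem_top z)
  exact ⟨w, hw⟩

lemma Ψ_inclPrev' (n : ℕ) (a : 𝔱 K n) :
    Ψ K n (inclPrev' K n a) = ASdp.inl (ρT K n) a := by
  have h : (Ψ K n).comp (inclPrev' K n) = ASdp.inl (ρT K n) := by
    apply quot_free_hom_ext
    intro p
    obtain ⟨⟨i, j⟩, hij⟩ := p
    rw [LieHom.comp_apply]
    show Ψ K n (inclPrev' K n (mkL (relIdeal K n) (gen K n i j hij))) = _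
    rw [show inclPrev' K n (mkL (relIdeal K n) (gen K n i j hij)) =
        inclPrev K n (gen K n i j hij) from descend_mk _ _ _ _]
    rw [inclPrev_gen, tL_eq K (castSucc_ne hij)]
    rw [show Ψ K n (mkL (relIdeal K (n + 1)) (gen K (n + 1) i.castSucc j.castSucc
        (castSucc_ne hij))) = ψaux K n (gen K (n + 1) i.castSucc j.castSucc (castSucc_ne hij))
      from descend_mk _ _ _ _]
    rw [ψaux_gen, gmap_small K (Fin.castSucc_lt_last i).ne (Fin.castSucc_lt_last j).ne,
      Fin.castPred_castSucc, Fin.castPred_castSucc]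
    rw [ASdp.inl_apply, tL_eq K hij]
    rfl
  exact DFunLike.congr_fun h a

lemma Ψ_inclLast (n : ℕ) (u : FL K n) :
    Ψ K n (inclLast K n u) = ASdp.inr (ρT K n) u := by
  have h : (Ψ K n).comp (inclLast K n) = ASdp.inr (ρT K n) := by
    apply hom_ext
    intro α
    rw [LieHom.comp_apply, inclLast_of, tL_eq K (Fin.castSucc_lt_last α).ne]
    rw [show Ψ K n (mkL (relIdeal K (n + 1)) (gen K (n + 1) α.castSucc (Fin.last n)
        (Fin.castSucc_lt_last α).ne)) = ψaux K n (gen K (n + 1) α.castSucc (Fin.last n)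
        (Fin.castSucc_lt_last α).ne) from descend_mk _ _ _ _]
    rw [ψaux_gen, gmap_last_right K (Fin.castSucc_lt_last α).ne, Fin.castPred_castSucc]
    rfl
  exact DFunLike.congr_fun h u

lemma Ψ_Θ (n : ℕ) (a : 𝔱 K n) (u : FL K n) :
    Ψ K n (Θ K n (a, u)) = ASdp.mk a u := by
  rw [Θ_apply, map_add, Ψ_inclPrev', Ψ_inclLast, ASdp.inl_apply, ASdp.inr_apply,
    ASdp.mk_add_mk, add_zero, zero_add]

lemma Θ_injective (n : ℕ) : Function.Injective (Θ K n) := by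
  rintro ⟨a, u⟩ ⟨b, v⟩ h
  have h2 := congrArg (Ψ K n) h
  rw [Ψ_Θ, Ψ_Θ] at h2
  exact h2

end Main3

/-- Drinfeld: the Lie subalgebra of `𝔱_n` generated by the `t_{αn}` is an
ideal, and the natural map `𝔱_{n−1} ⊕ F_Lie(t_{1n},…,t_{n−1,n}) → 𝔱_n` is a linear
isomorphism (so `𝔱_n` is the semidirect product of `𝔱_{n−1}` with the free Lie algebra
on the `t_{αn}`). -/
theorem stmt10 (n : ℕ) :
    (∀ y x : 𝔱 K (n + 1),
        x ∈ LieSubalgebra.lieSpan K (𝔱 K (n + 1))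
            {z | ∃ α : Fin n, z = tL K (n + 1) α.castSucc (Fin.last n)} →
        ⁅y, x⁆ ∈ LieSubalgebra.lieSpan K (𝔱 K (n + 1))
            {z | ∃ α : Fin n, z = tL K (n + 1) α.castSucc (Fin.last n)}) ∧
      ∃ e : (𝔱 K n × FreeLieAlgebra K (Fin n)) ≃ₗ[K] 𝔱 K (n + 1),
        ∀ (P : FreeLieAlgebra K (Gen n)) (Q : FreeLieAlgebra K (Fin n)),
          e (LieSubmodule.Quotient.mk' (relIdeal K n) P, Q) =
            inclPrev K n P + inclLast K n Q := by
  constructor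
  · exact part1 K n
  · refine ⟨LinearEquiv.ofBijective (Θ K n) ⟨Θ_injective K n, Θ_surjective K n⟩, ?_⟩
    intro P Q
    show Θ K n _ = _
    show Θ K n (mkL (relIdeal K n) P, Q) = _
    rw [Θ_apply]
    rw [show inclPrev' K n (mkL (relIdeal K n) P) = inclPrev K n P from descend_mk _ _ _ _]

end Stmt10
end
end

section
/- Let f_0 : X_0 → Y_0 be a morphism of K-vector spaces and f : X → Y a morphism of topologically free K[[ℏ]]-modules whose reduction mod ℏ is f_0. Then the following are equivalent: (1) the reduction map Ker(f)/ℏ·Ker(f) → Ker(f_0) is an isomorphism; (2) the image Im(f) is a divisible (i.e. ℏ-saturated) submodule of Y, meaning ℏY ∩ Im(f) = ℏ·Im(f). -/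
noncomputable section

namespace Stmt11

/-- The base ring `K[[ℏ]]`. -/
abbrev R (K : Type*) [Field K] := PowerSeries K

/-- The formal parameter `ℏ`. -/
def hbar (K : Type*) [Field K] : R K := PowerSeries.X

/-- The submodule `ℏ·M` of a `K[[ℏ]]`-module `M`. -/
def hSub (K : Type*) [Field K] (M : Type*) [AddCommGroup M] [Module (R K) M] :
    Submodule (R K) M :=
  LinearMap.range (hbar K • (LinearMap.id : M →ₗ[R K] M))

variable {K : Type*} [Field K]
variable {X Y : Type*} [AddCommGroup X] [Module (R K) X] [AddCommGroup Y] [Module (R K) Y]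

/-- The reduction `f₀ : X/ℏX → Y/ℏY` of a morphism `f : X → Y` modulo `ℏ`. -/
def red (f : X →ₗ[R K] Y) : (X ⧸ hSub K X) →ₗ[R K] (Y ⧸ hSub K Y) :=
  Submodule.mapQ _ _ f (by
    rintro x ⟨y, rfl⟩
    exact ⟨f y, by simp⟩)

/-- for a morphism `f : X → Y` of topologically free `K[[ℏ]]`-modules
(`ℏ`-torsion-free, `ℏ`-adically complete and separated) with reduction `f₀ : X/ℏX → Y/ℏY`,
the following are equivalent: (1) the natural map `Ker(f)/ℏ·Ker(f) → Ker(f₀)` is an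
isomorphism (i.e. every element of `Ker f₀` lifts to `Ker f`, and an element of `Ker f`
lying in `ℏX` is `ℏ` times an element of `Ker f`); (2) `Im(f)` is divisible in `Y`,
i.e. `ℏY ∩ Im(f) = ℏ·Im(f)`. -/
theorem stmt11 [NoZeroSMulDivisors (R K) X] [NoZeroSMulDivisors (R K) Y]
    [IsAdicComplete (Ideal.span {(PowerSeries.X : R K)}) X]
    [IsAdicComplete (Ideal.span {(PowerSeries.X : R K)}) Y]
    (f : X →ₗ[R K] Y) :
    ((∀ k0 : X ⧸ hSub K X, red f k0 = 0 →
        ∃ k : X, f k = 0 ∧ Submodule.Quotient.mk k = k0) ∧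
      (∀ k : X, f k = 0 → k ∈ hSub K X → ∃ k' : X, f k' = 0 ∧ k = hbar K • k')) ↔
      ∀ y : Y, y ∈ LinearMap.range f → y ∈ hSub K Y → ∃ x : X, y = hbar K • f x := by
  constructor
  · rintro ⟨h1, _⟩ y ⟨x, rfl⟩ ⟨y', hy'⟩
    simp only [LinearMap.smul_apply, LinearMap.id_coe, id_eq] at hy'
    have hred : red f (Submodule.Quotient.mk x) = 0 := by
      have : (Submodule.Quotient.mk (f x) : Y ⧸ hSub K Y) = 0 := by
        rw [Submodule.Quotient.mk_eq_zero]
        exact ⟨y', by simp [hy']⟩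
      simpa [red, Submodule.mapQ_apply] using this
    obtain ⟨k, hk, hkx⟩ := h1 _ hred
    have : (Submodule.Quotient.mk (x - k) : X ⧸ hSub K X) = 0 := by
      rw [Submodule.Quotient.mk_eq_zero]
      have := (Submodule.Quotient.eq (hSub K X)).mp hkx.symm
      simpa using this
    rw [Submodule.Quotient.mk_eq_zero] at this
    obtain ⟨x', hx'⟩ := this
    simp only [LinearMap.smul_apply, LinearMap.id_coe, id_eq] at hx'
    refine ⟨x', ?_⟩
    have : f (x - k) = hbar K • f x' := by rw [← hx']; simp
    rw [map_sub, hk, sub_zero] at this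
    exact this
  · intro h
    constructor
    · intro k0 hk0
      obtain ⟨x, rfl⟩ := Submodule.Quotient.mk_surjective _ k0
      have hfx : f x ∈ hSub K Y := by
        have : (Submodule.Quotient.mk (f x) : Y ⧸ hSub K Y) = 0 := by
          simpa [red, Submodule.mapQ_apply] using hk0
        rwa [Submodule.Quotient.mk_eq_zero] at this
      obtain ⟨x', hx'⟩ := h (f x) ⟨x, rfl⟩ hfx
      refine ⟨x - hbar K • x', by simp [hx'], ?_⟩
      rw [Submodule.Quotient.eq]
      refine ⟨-x', ?_⟩
      simp
    · intro k hk ⟨x, hx⟩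
      simp only [LinearMap.smul_apply, LinearMap.id_coe, id_eq] at hx
      refine ⟨x, ?_, hx.symm⟩
      have : hbar K • f x = 0 := by rw [← map_smul, hx, hk]
      rcases smul_eq_zero.mp this with h' | h'
      · exact absurd h' PowerSeries.X_ne_zero
      · exact h'

end Stmt11
end
end

section
/- Let f : X → Y be a morphism of topologically free K[[ℏ]]-modules such that Im(f) is divisible in Y. Then for every x_0 in the kernel of the reduction f_0 : X/ℏX → Y/ℏY, there exists x ∈ Ker(f) whose reduction mod ℏ is x_0. -/
noncomputable section

namespace Stmt12

/-- The base ring `K[[ℏ]]`. -/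
abbrev R (K : Type*) [Field K] := PowerSeries K

/-- The formal parameter `ℏ`. -/
def hbar (K : Type*) [Field K] : R K := PowerSeries.X

/-- The submodule `ℏ·M` of a `K[[ℏ]]`-module `M`. -/
def hSub (K : Type*) [Field K] (M : Type*) [AddCommGroup M] [Module (R K) M] :
    Submodule (R K) M :=
  LinearMap.range (hbar K • (LinearMap.id : M →ₗ[R K] M))

variable {K : Type*} [Field K]
variable {X Y : Type*} [AddCommGroup X] [Module (R K) X] [AddCommGroup Y] [Module (R K) Y]

/-- The reduction `f₀ : X/ℏX → Y/ℏY` of a morphism `f : X → Y` modulo `ℏ`. -/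
def red (f : X →ₗ[R K] Y) : (X ⧸ hSub K X) →ₗ[R K] (Y ⧸ hSub K Y) :=
  Submodule.mapQ _ _ f (by
    rintro x ⟨y, rfl⟩
    exact ⟨f y, by simp⟩)

/-- if `f : X → Y` is a morphism of topologically free `K[[ℏ]]`-modules whose
image is divisible in `Y` (`ℏY ∩ Im f ⊆ ℏ·Im f`), then every element of the kernel of the
reduction `f₀ : X/ℏX → Y/ℏY` is the reduction of an element of `Ker f`. -/
theorem stmt12 [NoZeroSMulDivisors (R K) X] [NoZeroSMulDivisors (R K) Y]
    [IsAdicComplete (Ideal.span {(PowerSeries.X : R K)}) X]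
    [IsAdicComplete (Ideal.span {(PowerSeries.X : R K)}) Y]
    (f : X →ₗ[R K] Y)
    (hdiv : ∀ y : Y, y ∈ LinearMap.range f → y ∈ hSub K Y → ∃ x : X, y = hbar K • f x)
    (x0 : X ⧸ hSub K X) (hx0 : red f x0 = 0) :
    ∃ x : X, f x = 0 ∧ Submodule.Quotient.mk x = x0 := by
  obtain ⟨x₁, rfl⟩ := Submodule.Quotient.mk_surjective _ x0
  have hmem : f x₁ ∈ hSub K Y := by
    have : red f (Submodule.Quotient.mk x₁) = Submodule.Quotient.mk (f x₁) := by
      simp [red, Submodule.mapQ_apply]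
    rw [this] at hx0
    exact (Submodule.Quotient.mk_eq_zero _).mp hx0
  obtain ⟨u, hu⟩ := hdiv (f x₁) ⟨x₁, rfl⟩ hmem
  refine ⟨x₁ - hbar K • u, ?_, ?_⟩
  · simp [map_sub, map_smul, ← hu]
  · rw [eq_comm, Submodule.Quotient.eq]
    exact ⟨u, by simp⟩

end Stmt12
end
end

section
/- Let H be a Hopf algebra over K[[ℏ]] (topologically free), J ∈ (H ⊗̂ H)^× an invertible twist, and define Φ = (J^{2,3} · (id⊗Δ)(J))^{-1} · J^{1,2} · (Δ⊗id)(J). If Φ commutes with (Δ⊗Δ)∘Δ-images, i.e. Φ is invariant in the sense that Φ·Δ^{(3)}(x) = Δ^{(3)}(x)·Φ for all x (where Δ^{(3)} is the threefold coproduct), then Φ satisfies the pentagon equation Φ^{1,2,34} Φ^{12,3,4} = Φ^{2,3,4} Φ^{1,23,4} Φ^{1,2,3}. -/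
open scoped TensorProduct

noncomputable section

namespace HopfTwist

variable (R : Type*) [CommRing R]
variable (H : Type*) [Semiring H] [HopfAlgebra R H]

open Algebra.TensorProduct

/-- The coproduct of `H`, as an algebra morphism. -/
def Δ : H →ₐ[R] H ⊗[R] H := Bialgebra.comulAlgHom R H

/-- `x ↦ x^{1,2} = x ⊗ 1`. -/
def e12 : H ⊗[R] H →ₐ[R] (H ⊗[R] H) ⊗[R] H := includeLeft

/-- `x ↦ x^{2,3} = 1 ⊗ x`. -/
def e23 : H ⊗[R] H →ₐ[R] (H ⊗[R] H) ⊗[R] H :=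
  Algebra.TensorProduct.map includeRight (AlgHom.id R H)

/-- `x ↦ x^{1,3}`. -/
def e13 : H ⊗[R] H →ₐ[R] (H ⊗[R] H) ⊗[R] H :=
  Algebra.TensorProduct.map includeLeft (AlgHom.id R H)

/-- `x ↦ x^{12,3} = (Δ ⊗ id)(x)`. -/
def e12_3 : H ⊗[R] H →ₐ[R] (H ⊗[R] H) ⊗[R] H :=
  Algebra.TensorProduct.map (Δ R H) (AlgHom.id R H)

/-- `x ↦ x^{1,23} = (id ⊗ Δ)(x)`. -/
def e1_23 : H ⊗[R] H →ₐ[R] (H ⊗[R] H) ⊗[R] H :=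
  ((Algebra.TensorProduct.assoc R R R H H H).symm.toAlgHom).comp
    (Algebra.TensorProduct.map (AlgHom.id R H) (Δ R H))

/-- `x ↦ x^{1,2,34}`. -/
def f12_34 : (H ⊗[R] H) ⊗[R] H →ₐ[R] ((H ⊗[R] H) ⊗[R] H) ⊗[R] H :=
  ((Algebra.TensorProduct.assoc R R R (H ⊗[R] H) H H).symm.toAlgHom).comp
    (Algebra.TensorProduct.map (AlgHom.id R (H ⊗[R] H)) (Δ R H))

/-- `x ↦ x^{12,3,4}`. -/
def f12_3_4 : (H ⊗[R] H) ⊗[R] H →ₐ[R] ((H ⊗[R] H) ⊗[R] H) ⊗[R] H :=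
  Algebra.TensorProduct.map (e12_3 R H) (AlgHom.id R H)

/-- `x ↦ x^{2,3,4}`. -/
def f2_3_4 : (H ⊗[R] H) ⊗[R] H →ₐ[R] ((H ⊗[R] H) ⊗[R] H) ⊗[R] H :=
  Algebra.TensorProduct.map (e23 R H) (AlgHom.id R H)

/-- `x ↦ x^{1,23,4}`. -/
def f1_23_4 : (H ⊗[R] H) ⊗[R] H →ₐ[R] ((H ⊗[R] H) ⊗[R] H) ⊗[R] H :=
  Algebra.TensorProduct.map (e1_23 R H) (AlgHom.id R H)

/-- `x ↦ x^{1,2,3}`. -/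
def f1_2_3 : (H ⊗[R] H) ⊗[R] H →ₐ[R] ((H ⊗[R] H) ⊗[R] H) ⊗[R] H := includeLeft

/-- The threefold coproduct `Δ^{(3)} : H → H^{⊗3}`. -/
def Δ3 : H →ₐ[R] (H ⊗[R] H) ⊗[R] H :=
  (Algebra.TensorProduct.map (Δ R H) (AlgHom.id R H)).comp (Δ R H)

/-- The twisted associator `d̃(J) = (J^{2,3} J^{1,23})^{-1} J^{1,2} J^{12,3}`, as an
invertible element of `H^{⊗3}`. -/
def dtilde (J : (H ⊗[R] H)ˣ) : ((H ⊗[R] H) ⊗[R] H)ˣ :=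
  (Units.map ((e23 R H : H ⊗[R] H →+* (H ⊗[R] H) ⊗[R] H).toMonoidHom) J *
      Units.map ((e1_23 R H : H ⊗[R] H →+* (H ⊗[R] H) ⊗[R] H).toMonoidHom) J)⁻¹ *
    Units.map ((e12 R H : H ⊗[R] H →+* (H ⊗[R] H) ⊗[R] H).toMonoidHom) J *
    Units.map ((e12_3 R H : H ⊗[R] H →+* (H ⊗[R] H) ⊗[R] H).toMonoidHom) J

end HopfTwist

namespace HopfTwist

section Aux

variable (R : Type*) [CommRing R]
variable (H : Type*) [Semiring H] [HopfAlgebra R H]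

open Algebra.TensorProduct

lemma mc_zero {A : Type*} [NonUnitalNonAssocSemiring A] (a : A) : a * 0 = 0 * a := by
  rw [mul_zero, zero_mul]

lemma mc_add {A : Type*} [NonUnitalNonAssocSemiring A] {a u v : A}
    (hu : a * u = u * a) (hv : a * v = v * a) : a * (u + v) = (u + v) * a := by
  rw [mul_add, add_mul, hu, hv]

lemma mc_mul {A : Type*} [Semigroup A] {a b c : A}
    (h1 : a * b = b * a) (h2 : a * c = c * a) : a * (b * c) = (b * c) * a := by
  rw [← mul_assoc, h1, mul_assoc, h2, ← mul_assoc]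

lemma mul_add' {A : Type*} [NonUnitalNonAssocSemiring A] {a u v b c : A}
    (hu : u = a * b) (hv : v = a * c) : u + v = a * (b + c) := by
  rw [mul_add, hu, hv]

lemma e12_apply (x y : H) : e12 R H (x ⊗ₜ y) = (x ⊗ₜ y) ⊗ₜ 1 := rfl

lemma e23_apply (x y : H) : e23 R H (x ⊗ₜ[R] y) = ((1 : H) ⊗ₜ x) ⊗ₜ y := by
  simp [e23]

lemma e12_3_apply (x y : H) : e12_3 R H (x ⊗ₜ[R] y) = (Δ R H x) ⊗ₜ y := by
  simp [e12_3]

lemma e1_23_apply (x y : H) :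
    e1_23 R H (x ⊗ₜ[R] y)
      = (Algebra.TensorProduct.assoc R R R H H H).symm (x ⊗ₜ (Δ R H y)) := by
  simp [e1_23]

lemma f1_2_3_apply (z : (H ⊗[R] H) ⊗[R] H) : f1_2_3 R H z = z ⊗ₜ 1 := rfl

lemma f12_3_4_apply (p : H ⊗[R] H) (r : H) :
    f12_3_4 R H (p ⊗ₜ r) = e12_3 R H p ⊗ₜ r := by simp [f12_3_4]

lemma f2_3_4_apply (p : H ⊗[R] H) (r : H) :
    f2_3_4 R H (p ⊗ₜ r) = e23 R H p ⊗ₜ r := by simp [f2_3_4]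

lemma f1_23_4_apply (p : H ⊗[R] H) (r : H) :
    f1_23_4 R H (p ⊗ₜ r) = e1_23 R H p ⊗ₜ r := by simp [f1_23_4]

lemma f12_34_apply (p : H ⊗[R] H) (r : H) :
    f12_34 R H (p ⊗ₜ r)
      = (Algebra.TensorProduct.assoc R R R (H ⊗[R] H) H H).symm (p ⊗ₜ (Δ R H r)) := by
  simp [f12_34]

lemma Δ3_apply (x : H) : Δ3 R H x = e12_3 R H (Δ R H x) := rfl

/-- coassociativity, in the form needed here -/
lemma CO (x : H) : e1_23 R H (Δ R H x) = e12_3 R H (Δ R H x) := by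
  have hr : ∀ t : H ⊗[R] H,
      e12_3 R H t = LinearMap.rTensor H (Coalgebra.comul (R := R) (A := H)) t := by
    intro t
    induction t using TensorProduct.induction_on with
    | zero => simp
    | tmul x y => simp [e12_3_apply, Δ, Bialgebra.comulAlgHom_apply]
    | add u v hu hv => simp [map_add, hu, hv]
  have hagree : ∀ (x : H) (s : H ⊗[R] H),
      (Algebra.TensorProduct.assoc R R R H H H).symm (x ⊗ₜ s)
        = (TensorProduct.assoc R H H H).symm (x ⊗ₜ s) := by
    intro x s
    induction s using TensorProduct.induction_on with
    | zero => simp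
    | tmul a b => simp
    | add u v hu hv => simp [TensorProduct.tmul_add, map_add, hu, hv]
  have hl : ∀ t : H ⊗[R] H,
      e1_23 R H t
        = (TensorProduct.assoc R H H H).symm
            (LinearMap.lTensor H (Coalgebra.comul (R := R) (A := H)) t) := by
    intro t
    induction t using TensorProduct.induction_on with
    | zero => simp
    | tmul x y =>
        rw [e1_23_apply, hagree]
        simp [Δ, Bialgebra.comulAlgHom_apply]
    | add u v hu hv => simp [map_add, hu, hv]
  rw [hl, hr]
  simp [Δ, Bialgebra.comulAlgHom_apply]

lemma CO2 (x : H) : e1_23 R H ((1 : H) ⊗ₜ x) = e23 R H (Δ R H x) := by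
  rw [e1_23_apply]
  generalize (Δ R H x) = s
  induction s using TensorProduct.induction_on with
  | zero => simp
  | tmul a b => simp [e23_apply]
  | add u v hu hv => simp [TensorProduct.tmul_add, map_add, hu, hv]

lemma c1 (t : H ⊗[R] H) : f12_34 R H (e23 R H t) = f2_3_4 R H (e1_23 R H t) := by
  have hA : ∀ (x : H) (s : H ⊗[R] H),
      (Algebra.TensorProduct.assoc R R R (H ⊗[R] H) H H).symm (((1 : H) ⊗ₜ x) ⊗ₜ s)
        = f2_3_4 R H ((Algebra.TensorProduct.assoc R R R H H H).symm (x ⊗ₜ s)) := by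
    intro x s
    induction s using TensorProduct.induction_on with
    | zero => simp
    | tmul a b => simp [f2_3_4_apply, e23_apply, Algebra.TensorProduct.one_def]
    | add u v hu hv => simp [TensorProduct.tmul_add, map_add, hu, hv]
  induction t using TensorProduct.induction_on with
  | zero => simp
  | tmul x y => rw [e23_apply, f12_34_apply, e1_23_apply, hA]
  | add u v hu hv => simp [map_add, hu, hv]

/-- The reassociation `H ⊗ (H ⊗ (H ⊗ H)) → ((H ⊗ H) ⊗ H) ⊗ H`. -/
def Wmap : H ⊗[R] (H ⊗[R] (H ⊗[R] H)) →ₗ[R] ((H ⊗[R] H) ⊗[R] H) ⊗[R] H :=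
  ((TensorProduct.assoc R (H ⊗[R] H) H H).symm.toLinearMap).comp
    ((TensorProduct.assoc R H H (H ⊗[R] H)).symm.toLinearMap)

lemma Wmap_tmul (x a b c : H) :
    Wmap R H (x ⊗ₜ (a ⊗ₜ (b ⊗ₜ c))) = ((x ⊗ₜ a) ⊗ₜ b) ⊗ₜ c := by
  simp [Wmap]

lemma hW1 : ∀ (x a : H) (s : H ⊗[R] H),
    (Algebra.TensorProduct.assoc R R R (H ⊗[R] H) H H).symm ((x ⊗ₜ a) ⊗ₜ s)
      = Wmap R H (x ⊗ₜ (a ⊗ₜ s)) := by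
  intro x a s
  induction s using TensorProduct.induction_on with
  | zero => simp
  | tmul p q => simp [Wmap_tmul]
  | add u v hu hv => simp [TensorProduct.tmul_add, map_add, hu, hv]

lemma h2a (x : H) (t : H ⊗[R] H) :
    f12_34 R H ((Algebra.TensorProduct.assoc R R R H H H).symm (x ⊗ₜ t))
      = Wmap R H (x ⊗ₜ (LinearMap.lTensor H (Coalgebra.comul (R := R) (A := H)) t)) := by
  induction t using TensorProduct.induction_on with
  | zero => simp
  | tmul a b =>
      rw [show (Algebra.TensorProduct.assoc R R R H H H).symm (x ⊗ₜ (a ⊗ₜ b))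
            = (x ⊗ₜ a) ⊗ₜ b from rfl]
      rw [f12_34_apply, hW1]
      simp [Δ, Bialgebra.comulAlgHom_apply]
  | add u v hu hv => simp [TensorProduct.tmul_add, map_add, hu, hv]

lemma hW2 : ∀ (x : H) (s : H ⊗[R] H) (b : H),
    ((Algebra.TensorProduct.assoc R R R H H H).symm (x ⊗ₜ s)) ⊗ₜ[R] b
      = Wmap R H (x ⊗ₜ (TensorProduct.assoc R H H H (s ⊗ₜ b))) := by
  intro x s b
  induction s using TensorProduct.induction_on with
  | zero => simp
  | tmul p q => simp [Wmap_tmul]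
  | add u v hu hv =>
      simp only [map_add, TensorProduct.add_tmul, TensorProduct.tmul_add] at *
      simp [hu, hv]

lemma h2b (x : H) (t : H ⊗[R] H) :
    f1_23_4 R H ((Algebra.TensorProduct.assoc R R R H H H).symm (x ⊗ₜ t))
      = Wmap R H (x ⊗ₜ (TensorProduct.assoc R H H H
          (LinearMap.rTensor H (Coalgebra.comul (R := R) (A := H)) t))) := by
  induction t using TensorProduct.induction_on with
  | zero => simp
  | tmul a b =>
      rw [show (Algebra.TensorProduct.assoc R R R H H H).symm (x ⊗ₜ (a ⊗ₜ b))
            = (x ⊗ₜ a) ⊗ₜ b from rfl]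
      rw [f1_23_4_apply, e1_23_apply, hW2]
      simp [Δ, Bialgebra.comulAlgHom_apply]
  | add u v hu hv => simp [TensorProduct.tmul_add, map_add, hu, hv]

lemma c2 (t : H ⊗[R] H) : f12_34 R H (e1_23 R H t) = f1_23_4 R H (e1_23 R H t) := by
  induction t using TensorProduct.induction_on with
  | zero => simp
  | tmul x y =>
      rw [e1_23_apply, h2a, h2b]
      rw [show Δ R H y = Coalgebra.comul (R := R) y from rfl]
      rw [Coalgebra.coassoc_apply]
  | add u v hu hv => simp [map_add, hu, hv]

lemma c3 (t : H ⊗[R] H) : f12_34 R H (e12 R H t) = f1_2_3 R H (e12 R H t) := by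
  rw [show e12 R H t = t ⊗ₜ 1 from rfl, f12_34_apply, f1_2_3_apply]
  rw [map_one, Algebra.TensorProduct.one_def]
  simp

lemma c4 (t : H ⊗[R] H) : f12_34 R H (e12_3 R H t) = f12_3_4 R H (e1_23 R H t) := by
  have hB : ∀ (x : H) (s : H ⊗[R] H),
      f12_3_4 R H ((Algebra.TensorProduct.assoc R R R H H H).symm (x ⊗ₜ s))
        = (Algebra.TensorProduct.assoc R R R (H ⊗[R] H) H H).symm ((Δ R H x) ⊗ₜ s) := by
    intro x s
    induction s using TensorProduct.induction_on with
    | zero => simp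
    | tmul a b => simp [f12_3_4_apply, e12_3_apply]
    | add u v hu hv => simp [TensorProduct.tmul_add, map_add, hu, hv]
  induction t using TensorProduct.induction_on with
  | zero => simp
  | tmul x y => rw [e12_3_apply, f12_34_apply, e1_23_apply, hB]
  | add u v hu hv => simp [map_add, hu, hv]

lemma c5 (t : H ⊗[R] H) : f12_3_4 R H (e23 R H t) = f2_3_4 R H (e23 R H t) := by
  induction t using TensorProduct.induction_on with
  | zero => simp
  | tmul x y =>
      rw [e23_apply, f12_3_4_apply, f2_3_4_apply]
      rw [show ((1 : H) ⊗ₜ[R] x) = Algebra.TensorProduct.includeRight (R := R) (A := H) x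
            from rfl]
      rw [show e12_3 R H (Algebra.TensorProduct.includeRight (R := R) (A := H) x)
            = (Δ R H 1) ⊗ₜ x from by simp [e12_3]]
      rw [show e23 R H (Algebra.TensorProduct.includeRight (R := R) (A := H) x)
            = ((1 : H ⊗[R] H)) ⊗ₜ x from by simp [e23, Algebra.TensorProduct.one_def]]
      rw [map_one]
  | add u v hu hv => simp [map_add, hu, hv]

lemma c6 (t : H ⊗[R] H) : f12_3_4 R H (e12 R H t) = f1_2_3 R H (e12_3 R H t) := by
  rw [show e12 R H t = t ⊗ₜ 1 from rfl, f12_3_4_apply, f1_2_3_apply]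

lemma c7 (t : H ⊗[R] H) : f12_3_4 R H (e12_3 R H t) = f1_23_4 R H (e12_3 R H t) := by
  induction t using TensorProduct.induction_on with
  | zero => simp
  | tmul x y => rw [e12_3_apply, f12_3_4_apply, f1_23_4_apply, CO]
  | add u v hu hv => simp [map_add, hu, hv]

lemma c8 (t : H ⊗[R] H) : f1_23_4 R H (e23 R H t) = f2_3_4 R H (e12_3 R H t) := by
  induction t using TensorProduct.induction_on with
  | zero => simp
  | tmul x y => rw [e23_apply, f1_23_4_apply, e12_3_apply, f2_3_4_apply, CO2]
  | add u v hu hv => simp [map_add, hu, hv]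

lemma c9 (t : H ⊗[R] H) : f1_23_4 R H (e12 R H t) = f1_2_3 R H (e1_23 R H t) := by
  rw [show e12 R H t = t ⊗ₜ 1 from rfl, f1_23_4_apply, f1_2_3_apply]

lemma c10 (t : H ⊗[R] H) : f2_3_4 R H (e12 R H t) = f1_2_3 R H (e23 R H t) := by
  rw [show e12 R H t = t ⊗ₜ 1 from rfl, f2_3_4_apply, f1_2_3_apply]

lemma comm1 (s t : H ⊗[R] H) :
    f1_2_3 R H (e12 R H s) * f2_3_4 R H (e23 R H t)
      = f2_3_4 R H (e23 R H t) * f1_2_3 R H (e12 R H s) := by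
  induction t using TensorProduct.induction_on with
  | zero => rw [map_zero]; exact mc_zero (A := (((H ⊗[R] H) ⊗[R] H) ⊗[R] H)) _
  | tmul x y =>
      rw [e23_apply, f2_3_4_apply]
      rw [show e23 R H ((1 : H) ⊗ₜ[R] x) = ((1 : H ⊗[R] H)) ⊗ₜ x from by simp [e23, Algebra.TensorProduct.one_def]]
      rw [show f1_2_3 R H (e12 R H s) = ((s ⊗ₜ 1) ⊗ₜ 1 : ((H ⊗[R] H) ⊗[R] H) ⊗[R] H)
            from rfl]
      rw [Algebra.TensorProduct.tmul_mul_tmul, Algebra.TensorProduct.tmul_mul_tmul,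
        Algebra.TensorProduct.tmul_mul_tmul, Algebra.TensorProduct.tmul_mul_tmul]
      simp
  | add u v hu hv => rw [map_add, map_add]; exact mc_add (A := (((H ⊗[R] H) ⊗[R] H) ⊗[R] H)) hu hv

lemma comm2 (Φv : (H ⊗[R] H) ⊗[R] H)
    (hΦ : ∀ x : H, Φv * Δ3 R H x = Δ3 R H x * Φv) (t : H ⊗[R] H) :
    f1_2_3 R H Φv * f1_23_4 R H (e12_3 R H t)
      = f1_23_4 R H (e12_3 R H t) * f1_2_3 R H Φv := by
  induction t using TensorProduct.induction_on with
  | zero => rw [map_zero]; exact mc_zero (A := (((H ⊗[R] H) ⊗[R] H) ⊗[R] H)) _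
  | tmul x y =>
      rw [e12_3_apply, f1_23_4_apply, CO, ← Δ3_apply, f1_2_3_apply]
      rw [Algebra.TensorProduct.tmul_mul_tmul, Algebra.TensorProduct.tmul_mul_tmul,
        hΦ, one_mul, mul_one]
  | add u v hu hv => rw [map_add, map_add]; exact mc_add (A := (((H ⊗[R] H) ⊗[R] H) ⊗[R] H)) hu hv

lemma comm_g1 (x : H) (z : (H ⊗[R] H) ⊗[R] H) :
    (((x ⊗ₜ (1 : H)) ⊗ₜ (1 : H)) ⊗ₜ (1 : H) : ((H ⊗[R] H) ⊗[R] H) ⊗[R] H) * f2_3_4 R H z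
      = f2_3_4 R H z * (((x ⊗ₜ (1 : H)) ⊗ₜ (1 : H)) ⊗ₜ (1 : H)) := by
  induction z using TensorProduct.induction_on with
  | zero => rw [map_zero]; exact mc_zero (A := (((H ⊗[R] H) ⊗[R] H) ⊗[R] H)) _
  | tmul w c =>
      induction w using TensorProduct.induction_on with
      | zero =>
          rw [show ((0 : H ⊗[R] H) ⊗ₜ[R] c) = (0 : (H ⊗[R] H) ⊗[R] H) from
            TensorProduct.zero_tmul _ c, map_zero]
          exact mc_zero (A := (((H ⊗[R] H) ⊗[R] H) ⊗[R] H)) _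
      | tmul p q =>
          rw [f2_3_4_apply, e23_apply]
          rw [Algebra.TensorProduct.tmul_mul_tmul, Algebra.TensorProduct.tmul_mul_tmul,
            Algebra.TensorProduct.tmul_mul_tmul, Algebra.TensorProduct.tmul_mul_tmul,
            Algebra.TensorProduct.tmul_mul_tmul, Algebra.TensorProduct.tmul_mul_tmul]
          simp
      | add u v hu hv =>
          rw [show ((u + v) ⊗ₜ[R] c) = u ⊗ₜ[R] c + v ⊗ₜ[R] c from
            TensorProduct.add_tmul u v c, map_add]
          exact mc_add (A := (((H ⊗[R] H) ⊗[R] H) ⊗[R] H)) hu hv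
  | add u v hu hv => rw [map_add]; exact mc_add (A := (((H ⊗[R] H) ⊗[R] H) ⊗[R] H)) hu hv

lemma key3 (x : H) (z : (H ⊗[R] H) ⊗[R] H) :
    Wmap R H (x ⊗ₜ (TensorProduct.assoc R H H H z))
      = (((x ⊗ₜ (1 : H)) ⊗ₜ (1 : H)) ⊗ₜ (1 : H)) * f2_3_4 R H z := by
  induction z using TensorProduct.induction_on with
  | zero =>
      rw [map_zero, TensorProduct.tmul_zero, map_zero, map_zero]
      exact (mul_zero (M₀ := (((H ⊗[R] H) ⊗[R] H) ⊗[R] H)) _).symm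
  | tmul w c =>
      induction w using TensorProduct.induction_on with
      | zero =>
          rw [show ((0 : H ⊗[R] H) ⊗ₜ[R] c) = (0 : (H ⊗[R] H) ⊗[R] H) from
            TensorProduct.zero_tmul _ c, map_zero, TensorProduct.tmul_zero, map_zero,
            map_zero]
          exact (mul_zero (M₀ := (((H ⊗[R] H) ⊗[R] H) ⊗[R] H)) _).symm
      | tmul p q =>
          rw [show (TensorProduct.assoc R H H H) ((p ⊗ₜ q) ⊗ₜ c) = p ⊗ₜ (q ⊗ₜ c) from rfl]
          rw [Wmap_tmul, f2_3_4_apply, e23_apply]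
          rw [Algebra.TensorProduct.tmul_mul_tmul, Algebra.TensorProduct.tmul_mul_tmul,
            Algebra.TensorProduct.tmul_mul_tmul]
          simp
      | add u v hu hv =>
          rw [show ((u + v) ⊗ₜ[R] c) = u ⊗ₜ[R] c + v ⊗ₜ[R] c from
            TensorProduct.add_tmul u v c, map_add, TensorProduct.tmul_add, map_add,
            map_add]
          exact mul_add' (A := (((H ⊗[R] H) ⊗[R] H) ⊗[R] H)) hu hv
  | add u v hu hv =>
      rw [map_add, TensorProduct.tmul_add, map_add, map_add]
      exact mul_add' (A := (((H ⊗[R] H) ⊗[R] H) ⊗[R] H)) hu hv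

lemma comm3 (Φv : (H ⊗[R] H) ⊗[R] H)
    (hΦ : ∀ x : H, Φv * Δ3 R H x = Δ3 R H x * Φv) (t : H ⊗[R] H) :
    f2_3_4 R H Φv * f1_23_4 R H (e1_23 R H t)
      = f1_23_4 R H (e1_23 R H t) * f2_3_4 R H Φv := by
  induction t using TensorProduct.induction_on with
  | zero => rw [map_zero]; exact mc_zero (A := (((H ⊗[R] H) ⊗[R] H) ⊗[R] H)) _
  | tmul x y =>
      rw [e1_23_apply, h2b]
      rw [show Δ R H y = Coalgebra.comul (R := R) y from rfl]
      have hco : LinearMap.rTensor H (Coalgebra.comul (R := R) (A := H))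
            (Coalgebra.comul (R := R) y)
          = (TensorProduct.assoc R H H H).symm
              (LinearMap.lTensor H (Coalgebra.comul (R := R) (A := H))
                (Coalgebra.comul (R := R) y)) := by
        rw [Coalgebra.coassoc_symm_apply]
      rw [hco, LinearEquiv.apply_symm_apply]
      have hz : LinearMap.lTensor H (Coalgebra.comul (R := R) (A := H))
            (Coalgebra.comul (R := R) y)
          = TensorProduct.assoc R H H H (Δ3 R H y) := by
        rw [← Coalgebra.coassoc_apply]
        congr 1
      rw [hz, key3]
      have h1 : f2_3_4 R H Φv * (((x ⊗ₜ (1:H)) ⊗ₜ (1:H)) ⊗ₜ (1:H)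
            : ((H ⊗[R] H) ⊗[R] H) ⊗[R] H)
          = (((x ⊗ₜ (1:H)) ⊗ₜ (1:H)) ⊗ₜ (1:H)) * f2_3_4 R H Φv :=
        (comm_g1 R H x Φv).symm
      have h2 : f2_3_4 R H Φv * f2_3_4 R H (Δ3 R H y)
          = f2_3_4 R H (Δ3 R H y) * f2_3_4 R H Φv :=
        ((map_mul (f2_3_4 R H) _ _).symm.trans
          (congrArg (f2_3_4 R H) (hΦ y))).trans (map_mul (f2_3_4 R H) _ _)
      exact mc_mul (A := (((H ⊗[R] H) ⊗[R] H) ⊗[R] H)) h1 h2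
  | add u v hu hv => rw [map_add, map_add]; exact mc_add (A := (((H ⊗[R] H) ⊗[R] H) ⊗[R] H)) hu hv

end Aux

section Pentagon

variable {G : Type*} [Group G]

lemma group_pentagon (A1 B1 C1 D1 P1 B2 D2 P2 B3 C3 D3 P3 X : G)
    (hR1 : C1 * D1 * P1 = A1 * B1)
    (hR2 : B3 * D2 * P2 = D1 * B2)
    (hR3 : C3 * D3 * P3 = C1 * B3)
    (K1 : Commute A1 C3)
    (K2 : Commute P1 B2)
    (K3 : Commute P3 D2) :
    ((D3 * D2)⁻¹ * A1 * X) * ((C3 * X)⁻¹ * B1 * B2) = P3 * P2 * P1 := by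
  calc ((D3 * D2)⁻¹ * A1 * X) * ((C3 * X)⁻¹ * B1 * B2)
      = D2⁻¹ * (D3⁻¹ * ((A1 * C3⁻¹) * (B1 * B2))) := by group
    _ = D2⁻¹ * (D3⁻¹ * ((C3⁻¹ * A1) * (B1 * B2))) := by rw [K1.inv_right.eq]
    _ = D2⁻¹ * (D3⁻¹ * (C3⁻¹ * ((A1 * B1) * B2))) := by group
    _ = D2⁻¹ * (D3⁻¹ * (C3⁻¹ * ((C1 * D1 * P1) * B2))) := by rw [hR1]
    _ = D2⁻¹ * (D3⁻¹ * (C3⁻¹ * (C1 * (D1 * (P1 * B2))))) := by group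
    _ = D2⁻¹ * (D3⁻¹ * (C3⁻¹ * (C1 * (D1 * (B2 * P1))))) := by rw [K2.eq]
    _ = D2⁻¹ * (D3⁻¹ * (C3⁻¹ * (C1 * ((D1 * B2) * P1)))) := by group
    _ = D2⁻¹ * (D3⁻¹ * (C3⁻¹ * (C1 * ((B3 * D2 * P2) * P1)))) := by rw [hR2]
    _ = D2⁻¹ * (D3⁻¹ * (C3⁻¹ * ((C1 * B3) * (D2 * (P2 * P1))))) := by group
    _ = D2⁻¹ * (D3⁻¹ * (C3⁻¹ * ((C3 * D3 * P3) * (D2 * (P2 * P1))))) := by rw [hR3]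
    _ = D2⁻¹ * ((P3 * D2) * (P2 * P1)) := by group
    _ = D2⁻¹ * ((D2 * P3) * (P2 * P1)) := by rw [K3.eq]
    _ = P3 * P2 * P1 := by group

end Pentagon

section Main

variable (R : Type*) [CommRing R]
variable (H : Type*) [Semiring H] [HopfAlgebra R H]

theorem pentagon (J : (H ⊗[R] H)ˣ)
    (hinv : ∀ x : H,
      (dtilde R H J : (H ⊗[R] H) ⊗[R] H) * Δ3 R H x =
        Δ3 R H x * (dtilde R H J :)) :
    f12_34 R H (dtilde R H J :) * f12_3_4 R H (dtilde R H J :) =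
      f2_3_4 R H (dtilde R H J :) * f1_23_4 R H (dtilde R H J :) *
        f1_2_3 R H (dtilde R H J :) := by
  let E12 := ((e12 R H : H ⊗[R] H →+* (H ⊗[R] H) ⊗[R] H)).toMonoidHom
  let E23 := ((e23 R H : H ⊗[R] H →+* (H ⊗[R] H) ⊗[R] H)).toMonoidHom
  let E12_3 := ((e12_3 R H : H ⊗[R] H →+* (H ⊗[R] H) ⊗[R] H)).toMonoidHom
  let E1_23 := ((e1_23 R H : H ⊗[R] H →+* (H ⊗[R] H) ⊗[R] H)).toMonoidHom
  let F1 := (f1_2_3 R H).toRingHom.toMonoidHom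
  let F2 := (f1_23_4 R H).toRingHom.toMonoidHom
  let F3 := (f2_3_4 R H).toRingHom.toMonoidHom
  let G1 := (f12_34 R H).toRingHom.toMonoidHom
  let G2 := (f12_3_4 R H).toRingHom.toMonoidHom
  let a := Units.map E12 J
  let b := Units.map E12_3 J
  let c := Units.map E23 J
  let d := Units.map E1_23 J
  let dt := dtilde R H J
  have hd : dt = (c * d)⁻¹ * a * b := rfl
  -- identifications
  have i1 : Units.map G1 c = Units.map F3 d := Units.ext (c1 R H (J : H ⊗[R] H))
  have i2 : Units.map G1 d = Units.map F2 d := Units.ext (c2 R H (J : H ⊗[R] H))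
  have i3 : Units.map G1 a = Units.map F1 a := Units.ext (c3 R H (J : H ⊗[R] H))
  have i4 : Units.map G1 b = Units.map G2 d := Units.ext (c4 R H (J : H ⊗[R] H))
  have i5 : Units.map G2 c = Units.map F3 c := Units.ext (c5 R H (J : H ⊗[R] H))
  have i6 : Units.map G2 a = Units.map F1 b := Units.ext (c6 R H (J : H ⊗[R] H))
  have i7 : Units.map G2 b = Units.map F2 b := Units.ext (c7 R H (J : H ⊗[R] H))
  have i8 : Units.map F2 c = Units.map F3 b := Units.ext (c8 R H (J : H ⊗[R] H))
  have i9 : Units.map F2 a = Units.map F1 d := Units.ext (c9 R H (J : H ⊗[R] H))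
  have i10 : Units.map F3 a = Units.map F1 c := Units.ext (c10 R H (J : H ⊗[R] H))
  -- pushed relations
  have hrel : c * d * dt = a * b := by
    rw [hd]; group
  have hrelF : ∀ F : ((H ⊗[R] H) ⊗[R] H) →* (((H ⊗[R] H) ⊗[R] H) ⊗[R] H),
      Units.map F c * Units.map F d * Units.map F dt
        = Units.map F a * Units.map F b := by
    intro F
    have := congrArg (Units.map F) hrel
    simpa [map_mul] using this
  have hR1 : Units.map F1 c * Units.map F1 d * Units.map F1 dt
      = Units.map F1 a * Units.map F1 b := hrelF F1
  have hR2 : Units.map F3 b * Units.map F2 d * Units.map F2 dt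
      = Units.map F1 d * Units.map F2 b := by
    have := hrelF F2; rw [i8, i9] at this; exact this
  have hR3 : Units.map F3 c * Units.map F3 d * Units.map F3 dt
      = Units.map F1 c * Units.map F3 b := by
    have := hrelF F3; rw [i10] at this; exact this
  -- commutations
  have K1 : Commute (Units.map F1 a) (Units.map F3 c) :=
    Units.ext (comm1 R H (J : H ⊗[R] H) (J : H ⊗[R] H))
  have K2 : Commute (Units.map F1 dt) (Units.map F2 b) :=
    Units.ext (comm2 R H (dt : (H ⊗[R] H) ⊗[R] H) hinv (J : H ⊗[R] H))
  have K3 : Commute (Units.map F3 dt) (Units.map F2 d) :=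
    Units.ext (comm3 R H (dt : (H ⊗[R] H) ⊗[R] H) hinv (J : H ⊗[R] H))
  -- expansions of the faces of dtilde
  have hG1 : Units.map G1 dt
      = (Units.map F3 d * Units.map F2 d)⁻¹ * Units.map F1 a * Units.map G2 d := by
    rw [show Units.map G1 dt = Units.map G1 ((c * d)⁻¹ * a * b) from rfl]
    rw [map_mul, map_mul, map_inv, map_mul, i1, i2, i3, i4]
  have hG2 : Units.map G2 dt
      = (Units.map F3 c * Units.map G2 d)⁻¹ * Units.map F1 b * Units.map F2 b := by
    rw [show Units.map G2 dt = Units.map G2 ((c * d)⁻¹ * a * b) from rfl]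
    rw [map_mul, map_mul, map_inv, map_mul, i5, i6, i7]
  have main : Units.map G1 dt * Units.map G2 dt
      = Units.map F3 dt * Units.map F2 dt * Units.map F1 dt := by
    rw [hG1, hG2]
    exact group_pentagon _ _ _ _ _ _ _ _ _ _ _ _ _ hR1 hR2 hR3 K1 K2 K3
  have := congrArg (Units.val) main
  exact this

end Main

end HopfTwist


open HopfTwist

/-- let `H` be a Hopf algebra over `K[[ℏ]]`, `J` an invertible twist and
`Φ = (J^{2,3}·(id⊗Δ)(J))^{-1}·J^{1,2}·(Δ⊗id)(J)`.  If `Φ` is invariant, i.e. commutes with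
the image of the threefold coproduct, then `Φ` satisfies the pentagon equation
`Φ^{1,2,34} Φ^{12,3,4} = Φ^{2,3,4} Φ^{1,23,4} Φ^{1,2,3}`. -/
theorem stmt14 (K : Type*) [Field K]
    (H : Type*) [Semiring H] [HopfAlgebra (PowerSeries K) H]
    (J : (H ⊗[PowerSeries K] H)ˣ)
    (hinv : ∀ x : H,
      (dtilde (PowerSeries K) H J : (H ⊗[PowerSeries K] H) ⊗[PowerSeries K] H) *
          Δ3 (PowerSeries K) H x =
        Δ3 (PowerSeries K) H x * (dtilde (PowerSeries K) H J :)) :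
    f12_34 (PowerSeries K) H (dtilde (PowerSeries K) H J :) *
        f12_3_4 (PowerSeries K) H (dtilde (PowerSeries K) H J :) =
      f2_3_4 (PowerSeries K) H (dtilde (PowerSeries K) H J :) *
        f1_23_4 (PowerSeries K) H (dtilde (PowerSeries K) H J :) *
        f1_2_3 (PowerSeries K) H (dtilde (PowerSeries K) H J :) := by
  exact HopfTwist.pentagon (PowerSeries K) H J hinv
end
end

section
/- Let H be a topologically free Hopf algebra over K[[ℏ]] with invertible R-matrix R ∈ H ⊗̂ H satisfying the quasitriangularity relations (Δ⊗id)(R) = R^{1,3}R^{2,3} and (id⊗Δ)(R) = R^{1,3}R^{1,2}, and suppose R − 1 ∈ ℏ·(H ⊗̂ H). Define δ_n = (id − η∘ε)^{⊗n} ∘ Δ^{(n)}. Then for every K[[ℏ]]-linear functional ξ on H, the element ℓ(ξ) = (id⊗ξ)(R) satisfies δ_n(ℓ(ξ)) ∈ ℏ^n H^{⊗̂n} for all n ≥ 0; that is, ℓ(ξ) belongs to the subalgebra H′ = { x ∈ H : δ_n(x) ∈ ℏ^n H^{⊗̂n} for all n }. -/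
open scoped TensorProduct

noncomputable section

namespace HopfTwist

/-- A bundled module, used to define iterated tensor powers. -/
structure Bundle (R : Type) [CommSemiring R] : Type 1 where
  carrier : Type
  [acm : AddCommMonoid carrier]
  [mod : Module R carrier]

attribute [instance] Bundle.acm Bundle.mod

variable (R : Type) [CommRing R] (H : Type) [Ring H] [HopfAlgebra R H]

/-- The bundled iterated tensor power `H^{⊗(n+1)}`. -/
def TpB : ℕ → Bundle R
  | 0 => ⟨H⟩
  | n + 1 =>
    letI b := TpB n
    ⟨b.carrier ⊗[R] H⟩

/-- The iterated tensor power `Tp n = H^{⊗(n+1)}`. -/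
def Tp (n : ℕ) : Type := (TpB R H n).carrier

instance (n : ℕ) : AddCommMonoid (Tp R H n) := (TpB R H n).acm
instance (n : ℕ) : Module R (Tp R H n) := (TpB R H n).mod

/-- The iterated coproduct `Δ^{(n+1)} : H → H^{⊗(n+1)}`. -/
def Dmap : (n : ℕ) → H →ₗ[R] Tp R H n
  | 0 => LinearMap.id
  | n + 1 =>
    (LinearMap.rTensor H (Dmap n)).comp (Bialgebra.comulAlgHom R H).toLinearMap

/-- The projection `π = id − η ∘ ε` on `H`. -/
def pr : H →ₗ[R] H :=
  LinearMap.id - (Algebra.linearMap R H).comp (Bialgebra.counitAlgHom R H).toLinearMap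

/-- The map `π^{⊗(n+1)}` on `H^{⊗(n+1)}`. -/
def Pmap : (n : ℕ) → Tp R H n →ₗ[R] Tp R H n
  | 0 => pr R H
  | n + 1 => TensorProduct.map (Pmap n) (pr R H)

/-- `δ_{n+1} = (id − η∘ε)^{⊗(n+1)} ∘ Δ^{(n+1)} : H → H^{⊗(n+1)}`. -/
def deltaMap (n : ℕ) : H →ₗ[R] Tp R H n := (Pmap R H n).comp (Dmap R H n)

/-- `ℓ(ξ) = (id ⊗ ξ)(R)`, the contraction of an element of `H ⊗ H` against a linear
functional in the second slot. -/
def contract (ξ : H →ₗ[R] R) : H ⊗[R] H →ₗ[R] H :=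
  (TensorProduct.rid R H).toLinearMap.comp (LinearMap.lTensor H ξ)

end HopfTwist

open HopfTwist

namespace Stmt17Aux

variable (R : Type) [CommRing R] (H : Type) [Ring H] [HopfAlgebra R H]

/-- `id ⊗ id ⊗ ξ` on `(H ⊗ H) ⊗ H`. -/
def c2 (ξ : H →ₗ[R] R) : (H ⊗[R] H) ⊗[R] H →ₗ[R] H ⊗[R] H :=
  (TensorProduct.rid R (H ⊗[R] H)).toLinearMap.comp (LinearMap.lTensor (H ⊗[R] H) ξ)

lemma c2_tmul (ξ : H →ₗ[R] R) (u : H ⊗[R] H) (b : H) :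
    c2 R H ξ (u ⊗ₜ[R] b) = ξ b • u := by
  simp [c2]

lemma pr_one : pr R H (1 : H) = 0 := by
  simp [pr, Algebra.linearMap_apply]

lemma contract_tmul (ξ : H →ₗ[R] R) (a b : H) :
    contract R H ξ (a ⊗ₜ[R] b) = ξ b • a := by
  simp [contract]

lemma delta_succ (n : ℕ) :
    deltaMap R H (n + 1) =
      (TensorProduct.map (deltaMap R H n) (pr R H)).comp
        (Bialgebra.comulAlgHom R H).toLinearMap := by
  show ((Pmap R H (n+1)).comp (Dmap R H (n+1))) = _
  have : (Pmap R H (n+1)).comp (LinearMap.rTensor H (Dmap R H n)) =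
      TensorProduct.map (deltaMap R H n) (pr R H) := by
    show (TensorProduct.map (Pmap R H n) (pr R H)).comp
        (TensorProduct.map (Dmap R H n) LinearMap.id) = _
    rw [← TensorProduct.map_comp]
    rfl
  show (Pmap R H (n+1)).comp ((LinearMap.rTensor H (Dmap R H n)).comp
      (Bialgebra.comulAlgHom R H).toLinearMap) = _
  rw [← this]
  rfl

lemma comul_contract (ξ : H →ₗ[R] R) :
    (Bialgebra.comulAlgHom R H).toLinearMap.comp (contract R H ξ) =
      (c2 R H ξ).comp (e12_3 R H).toLinearMap := by
  apply TensorProduct.ext'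
  intro a b
  simp [contract, c2, e12_3, Δ, TensorProduct.smul_tmul']

lemma vanish (ξ : H →ₗ[R] R) (n : ℕ) :
    ((TensorProduct.map (deltaMap R H n) (pr R H)).comp
      ((c2 R H ξ).comp (e13 R H).toLinearMap)) = 0 := by
  apply TensorProduct.ext'
  intro a b
  simp [c2, e13, pr_one, TensorProduct.smul_tmul']

lemma pure_comp (ξ : H →ₗ[R] R) (c d : H) :
    (c2 R H ξ).comp ((LinearMap.mulRight R (((1 : H) ⊗ₜ[R] c) ⊗ₜ[R] d)).comp
        (e13 R H).toLinearMap) =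
      ((TensorProduct.mk R H H).flip c).comp
        (contract R H (ξ.comp (LinearMap.mulRight R d))) := by
  apply TensorProduct.ext'
  intro r b
  simp [c2, e13, contract, Algebra.TensorProduct.tmul_mul_tmul,
    TensorProduct.smul_tmul']

end Stmt17Aux

open Stmt17Aux

/-- let `H` be a Hopf algebra over `K[[ℏ]]` with an invertible `R`-matrix
satisfying the quasitriangularity relations `(Δ⊗id)(R) = R^{1,3}R^{2,3}` and
`(id⊗Δ)(R) = R^{1,3}R^{1,2}`, with `R − 1 ∈ ℏ·(H⊗H)`.  Then for every `K[[ℏ]]`-linear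
functional `ξ` on `H`, the element `ℓ(ξ) = (id⊗ξ)(R)` satisfies
`δ_n(ℓ(ξ)) ∈ ℏ^n H^{⊗n}` for all `n ≥ 1`, where `δ_n = (id − η∘ε)^{⊗n} ∘ Δ^{(n)}`
(below, `deltaMap n` is `δ_{n+1}`); that is, `ℓ(ξ)` lies in Drinfeld's quantized formal
series Hopf subalgebra `H′`. -/
theorem stmt17 (K : Type) [Field K]
    (H : Type) [Ring H] [HopfAlgebra (PowerSeries K) H]
    (Rm : H ⊗[PowerSeries K] H) (hunit : IsUnit Rm)
    (hqt1 : e12_3 (PowerSeries K) H Rm = e13 (PowerSeries K) H Rm * e23 (PowerSeries K) H Rm)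
    (hqt2 : e1_23 (PowerSeries K) H Rm = e13 (PowerSeries K) H Rm * e12 (PowerSeries K) H Rm)
    (hsmall : ∃ y, Rm = 1 + (PowerSeries.X : PowerSeries K) • y)
    (ξ : H →ₗ[PowerSeries K] PowerSeries K) (n : ℕ) :
    ∃ z : Tp (PowerSeries K) H n,
      deltaMap (PowerSeries K) H n (contract (PowerSeries K) H ξ Rm) =
        ((PowerSeries.X : PowerSeries K) ^ (n + 1)) • z := by
  set S := PowerSeries K
  obtain ⟨y, hy⟩ := hsmall
  induction n generalizing ξ with
  | zero =>
    refine ⟨pr S H (contract S H ξ y), ?_⟩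
    have h1 : contract S H ξ (1 : H ⊗[S] H) = ξ 1 • 1 := by
      rw [Algebra.TensorProduct.one_def, contract_tmul]
    show (pr S H) (contract S H ξ Rm) =
      (PowerSeries.X : S) ^ (0 + 1) • pr S H (contract S H ξ y)
    rw [hy, map_add, map_smul, h1, map_add, map_smul, map_smul]
    simp only [pr_one, smul_zero, zero_add, pow_one]
  | succ n ih =>
    -- the linear map  y ↦ (δₙ ⊗ π)((id ⊗ id ⊗ ξ)(R^{13} · e23 y))
    set L : H ⊗[S] H →ₗ[S] Tp S H n ⊗[S] H :=
      (TensorProduct.map (deltaMap S H n) (pr S H)).comp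
        ((c2 S H ξ).comp ((LinearMap.mulLeft S (e13 S H Rm)).comp
          (e23 S H).toLinearMap)) with hL
    have key : ∀ v : H ⊗[S] H, ∃ w : Tp S H n ⊗[S] H,
        L v = ((PowerSeries.X : S) ^ (n + 1)) • w := by
      intro v
      induction v using TensorProduct.induction_on with
      | zero => exact ⟨0, by simp⟩
      | tmul c d =>
        have he23 : e23 S H (c ⊗ₜ[S] d) = ((1 : H) ⊗ₜ[S] c) ⊗ₜ[S] d := by
          simp [e23]
        have hmul : e13 S H Rm * (((1 : H) ⊗ₜ[S] c) ⊗ₜ[S] d) =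
            (LinearMap.mulRight S (((1 : H) ⊗ₜ[S] c) ⊗ₜ[S] d))
              ((e13 S H).toLinearMap Rm) := rfl
        have hp := congrArg (· Rm) (pure_comp S H ξ c d)
        simp only [LinearMap.comp_apply] at hp
        obtain ⟨z, hz⟩ := ih (ξ.comp (LinearMap.mulRight S d))
        refine ⟨z ⊗ₜ[S] pr S H c, ?_⟩
        rw [hL]
        simp only [LinearMap.comp_apply, AlgHom.toLinearMap_apply, he23,
          LinearMap.mulLeft_apply]
        rw [hmul, hp]
        simp only [LinearMap.flip_apply, TensorProduct.mk_apply,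
          TensorProduct.map_tmul, hz, TensorProduct.smul_tmul']
        exact congrArg (fun t => t ⊗ₜ[S] pr S H c) hz
      | add u v hu hv =>
        obtain ⟨w₁, h₁⟩ := hu
        obtain ⟨w₂, h₂⟩ := hv
        exact ⟨w₁ + w₂, by rw [map_add, h₁, h₂, smul_add]⟩
    obtain ⟨w, hw⟩ := key y
    refine ⟨w, ?_⟩
    have hcc := congrArg (· Rm) (comul_contract S H ξ)
    simp only [LinearMap.comp_apply, AlgHom.toLinearMap_apply] at hcc
    have step1 : deltaMap S H (n + 1) (contract S H ξ Rm) =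
        (TensorProduct.map (deltaMap S H n) (pr S H))
          ((c2 S H ξ) (e12_3 S H Rm)) := by
      rw [← hcc, delta_succ]
      rfl
    have he23R : e23 S H Rm = 1 + (PowerSeries.X : S) • (e23 S H) y := by
      rw [hy, map_add, map_one, map_smul]
    have hzero : (TensorProduct.map (deltaMap S H n) (pr S H))
        ((c2 S H ξ) (e13 S H Rm)) = 0 := by
      have := congrArg (· Rm) (vanish S H ξ n)
      simpa using this
    have hsplit : e13 S H Rm * e23 S H Rm =
        e13 S H Rm + (PowerSeries.X : S) • (e13 S H Rm * e23 S H y) := by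
      rw [he23R, mul_add, mul_one, mul_smul_comm]
    have hLy : (TensorProduct.map (deltaMap S H n) (pr S H))
        ((c2 S H ξ) (e13 S H Rm * e23 S H y)) = L y := rfl
    rw [step1, hqt1, hsplit, map_add, map_add, hzero, zero_add, map_smul,
      map_smul, hLy, hw, smul_smul, ← pow_succ']
    rfl
end
end
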